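/- arXiv:0712.2484 — 9 statements merged into one kernel-verified Lean document; each statement's English description precedes it below -/
import Mathlib

section
/- For every K > 0 there exist constants C₁, C₂ > 0 (depending only on K and on the constants C₁⁰, C₂⁰) such that for every ζ ∈ ℝ with |ζ| ≤ K and every r ∈ (0,1) one has C₁·r(1−r) ≤ F_*^{-1}(F_*(r)+ζ)·[1 − F_*^{-1}(F_*(r)+ζ)] ≤ C₂·r(1−r). -/
/-!
With `logit x = log x - log (1 - x)` one has `logit' = 1 / (x (1 - x)) ≤ C₁⁰ / |u_*|`, so
`|logit s - logit r| ≤ C₁⁰ |F_* s - F_* r|`. For `s = F_*⁻¹ (F_* r + ζ)` the right-hand side is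
at most `C₁⁰ K`. The two summands `log s - log r` and `log (1 - s) - log (1 - r)` of `logit s - logit r`
have opposite signs, so their sum `log (s (1 - s)) - log (r (1 - r))` is bounded by the same
quantity, and exponentiating gives the claim with `C₁ = exp (-C₁⁰ K)` and `C₂ = exp (C₁⁰ K)`.
-/

open Set Real intervalIntegral

noncomputable def logit (x : ℝ) : ℝ := log x - log (1 - x)

theorem hasDerivAt_logit {x : ℝ} (h₀ : x ≠ 0) (h₁ : x ≠ 1) :
    HasDerivAt logit (1 / (x * (1 - x))) x := by
  have h₁' : 1 - x ≠ 0 := sub_ne_zero.mpr (Ne.symm h₁)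
  have hlog_one_sub : HasDerivAt (fun y => log (1 - y)) ((1 - x)⁻¹ * (-1)) x :=
    (hasDerivAt_log h₁').comp x ((hasDerivAt_id x).const_sub 1)
  refine ((hasDerivAt_log h₀).sub hlog_one_sub).congr_deriv ?_
  field_simp
  ring

theorem abs_add_le_abs_sub_of_mul_nonpos {α : Type*} [CommRing α] [LinearOrder α]
    [IsStrictOrderedRing α] {a b : α} (h : a * b ≤ 0) : |a + b| ≤ |a - b| :=
  sq_le_sq.mp (by nlinarith)

theorem abs_log_mul_one_sub_sub_le_abs_logit_sub {r s : ℝ} (hr : r ∈ Ioo 0 1)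
    (hs : s ∈ Ioo 0 1) :
    |log (s * (1 - s)) - log (r * (1 - r))| ≤ |logit s - logit r| := by
  have hr' : 0 < 1 - r := sub_pos.mpr hr.2
  have hs' : 0 < 1 - s := sub_pos.mpr hs.2
  have hsplit : log (s * (1 - s)) - log (r * (1 - r)) =
      (log s - log r) + (log (1 - s) - log (1 - r)) := by
    rw [log_mul hs.1.ne' hs'.ne', log_mul hr.1.ne' hr'.ne']
    ring
  have hlogit : logit s - logit r = (log s - log r) - (log (1 - s) - log (1 - r)) := by
    unfold logit
    ring
  rw [hsplit, hlogit]
  apply abs_add_le_abs_sub_of_mul_nonpos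
  rcases le_total r s with hrs | hsr
  · exact mul_nonpos_of_nonneg_of_nonpos (sub_nonneg.mpr (log_le_log hr.1 hrs))
      (sub_nonpos.mpr (log_le_log hs' (by linarith)))
  · exact mul_nonpos_of_nonpos_of_nonneg (sub_nonpos.mpr (log_le_log hs.1 hsr))
      (sub_nonneg.mpr (log_le_log hr' (by linarith)))

theorem exp_neg_mul_le_and_le_exp_mul_of_abs_log_sub_le {p q M : ℝ} (hp : 0 < p) (hq : 0 < q)
    (h : |log q - log p| ≤ M) : exp (-M) * p ≤ q ∧ q ≤ exp M * p := by
  obtain ⟨hlow, hup⟩ := abs_le.mp h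
  constructor
  · calc exp (-M) * p = exp (-M + log p) := by rw [exp_add, exp_log hp]
      _ ≤ exp (log q) := exp_le_exp.mpr (by linarith)
      _ = q := exp_log hq
  · calc q = exp (log q) := (exp_log hq).symm
      _ ≤ exp (M + log p) := exp_le_exp.mpr (by linarith)
      _ = exp M * p := by rw [exp_add, exp_log hp]

theorem intervalIntegrable_one_div_abs {u : ℝ → ℝ} {a b : ℝ} (hu : ContinuousOn u (uIcc a b))
    (hne : ∀ x ∈ uIcc a b, u x ≠ 0) :
    IntervalIntegrable (fun x => 1 / |u x|) MeasureTheory.volume a b :=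
  (continuousOn_const.div hu.abs fun x hx => abs_ne_zero.mpr (hne x hx)).intervalIntegrable

theorem logit_sub_logit_le_mul_integral {u : ℝ → ℝ} {C r s : ℝ} (hr : 0 < r) (hrs : r ≤ s)
    (hs : s < 1) (hu : ContinuousOn u (Icc r s)) (hne : ∀ x ∈ Icc r s, u x ≠ 0)
    (hle : ∀ x ∈ Icc r s, |u x| ≤ C * (x * (1 - x))) :
    logit s - logit r ≤ C * ∫ x in r..s, 1 / |u x| := by
  rw [← uIcc_of_le hrs] at hu hne hle
  have hpos : ∀ x ∈ uIcc r s, 0 < x * (1 - x) := fun x hx => by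
    rw [uIcc_of_le hrs] at hx
    exact mul_pos (by linarith [hx.1]) (by linarith [hx.2])
  have hint : IntervalIntegrable (fun x => 1 / (x * (1 - x))) MeasureTheory.volume r s :=
    (continuousOn_const.div (by fun_prop) fun x hx => (hpos x hx).ne').intervalIntegrable
  have hderiv : ∀ x ∈ uIcc r s, HasDerivAt logit (1 / (x * (1 - x))) x := fun x hx =>
    hasDerivAt_logit (left_ne_zero_of_mul (hpos x hx).ne')
      (sub_ne_zero.mp (right_ne_zero_of_mul (hpos x hx).ne')).symm
  calc logit s - logit r = ∫ x in r..s, 1 / (x * (1 - x)) :=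
        (integral_eq_sub_of_hasDerivAt hderiv hint).symm
    _ ≤ ∫ x in r..s, C * (1 / |u x|) := by
        refine integral_mono_on hrs hint
          ((intervalIntegrable_one_div_abs hu hne).const_mul C) fun x hx => ?_
        rw [← uIcc_of_le hrs] at hx
        rw [mul_one_div, div_le_div_iff₀ (hpos x hx) (abs_pos.mpr (hne x hx))]
        linarith [hle x hx]
    _ = C * ∫ x in r..s, 1 / |u x| := integral_const_mul C _

theorem abs_logit_sub_le_mul_abs_sub {u F : ℝ → ℝ} {C : ℝ} (hu : ContinuousOn u (Ioo 0 1))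
    (hne : ∀ x ∈ Ioo (0 : ℝ) 1, u x ≠ 0) (hle : ∀ x ∈ Ioo (0 : ℝ) 1, |u x| ≤ C * (x * (1 - x)))
    (hF : ∀ r ∈ Ioo (0 : ℝ) 1, F r = ∫ η in (1 / 2 : ℝ)..r, 1 / |u η|)
    {r s : ℝ} (hr : r ∈ Ioo 0 1) (hs : s ∈ Ioo 0 1) :
    |logit s - logit r| ≤ C * |F s - F r| := by
  wlog hrs : r ≤ s generalizing r s
  · rw [abs_sub_comm, abs_sub_comm (F s)]
    exact this hs hr (le_of_not_ge hrs)
  have hsub : ∀ {a b}, a ∈ Ioo (0 : ℝ) 1 → b ∈ Ioo (0 : ℝ) 1 → uIcc a b ⊆ Ioo 0 1 :=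
    fun ha hb => ordConnected_Ioo.uIcc_subset ha hb
  have hint : ∀ {a b}, a ∈ Ioo (0 : ℝ) 1 → b ∈ Ioo (0 : ℝ) 1 →
      IntervalIntegrable (fun x => 1 / |u x|) MeasureTheory.volume a b := fun ha hb =>
    intervalIntegrable_one_div_abs (hu.mono (hsub ha hb)) fun x hx => hne x (hsub ha hb hx)
  have hhalf : (1 / 2 : ℝ) ∈ Ioo 0 1 := by norm_num
  have hFsr : F s - F r = ∫ x in r..s, 1 / |u x| := by
    rw [hF s hs, hF r hr, integral_interval_sub_left (hint hhalf hs) (hint hhalf hr)]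
  have hIcc : Icc r s ⊆ Ioo 0 1 := uIcc_of_le hrs ▸ hsub hr hs
  have hlogit := logit_sub_logit_le_mul_integral hr.1 hrs hs.2 (hu.mono hIcc)
    (fun x hx => hne x (hIcc hx)) (fun x hx => hle x (hIcc hx))
  have hlogit_mono : logit r ≤ logit s := by
    unfold logit
    linarith [log_le_log hr.1 hrs, log_le_log (sub_pos.mpr hs.2) (by linarith : 1 - s ≤ 1 - r)]
  have hint_nonneg : 0 ≤ ∫ x in r..s, 1 / |u x| := integral_nonneg hrs fun x _ => by positivity
  rwa [abs_of_nonneg (sub_nonneg.mpr hlogit_mono), hFsr, abs_of_nonneg hint_nonneg]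
theorem stmt_0_general
    (u F Finv : ℝ → ℝ) (C10 C20 : ℝ)
    (hC10 : 0 < C10) (hC20 : 0 < C20)
    (hu : ContDiffOn ℝ 1 u (Set.Icc 0 1))
    (hu_lb : ∀ r ∈ Set.Icc (0:ℝ) 1, -C10 * (r * (1 - r)) ≤ u r)
    (hu_ub : ∀ r ∈ Set.Icc (0:ℝ) 1, u r ≤ -C20 * (r * (1 - r)))
    (hF : ∀ r ∈ Set.Ioo (0:ℝ) 1, F r = ∫ η in (1/2 : ℝ)..r, 1 / |u η|)
    (hFinv_mem : ∀ x : ℝ, Finv x ∈ Set.Ioo (0:ℝ) 1)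
    (hFinv_right : ∀ x : ℝ, F (Finv x) = x)
    (K : ℝ) :
    ∃ C₁ C₂ : ℝ, 0 < C₁ ∧ 0 < C₂ ∧
      ∀ ζ : ℝ, |ζ| ≤ K → ∀ r ∈ Set.Ioo (0:ℝ) 1,
        C₁ * (r * (1 - r)) ≤ Finv (F r + ζ) * (1 - Finv (F r + ζ)) ∧
        Finv (F r + ζ) * (1 - Finv (F r + ζ)) ≤ C₂ * (r * (1 - r)) := by
  have hneg : ∀ x ∈ Ioo (0 : ℝ) 1, u x < 0 := fun x hx => by
    nlinarith [hu_ub x (Ioo_subset_Icc_self hx), mul_pos hx.1 (sub_pos.mpr hx.2)]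
  have hle : ∀ x ∈ Ioo (0 : ℝ) 1, |u x| ≤ C10 * (x * (1 - x)) := fun x hx => by
    rw [abs_of_neg (hneg x hx)]
    linarith [hu_lb x (Ioo_subset_Icc_self hx)]
  refine ⟨exp (-(C10 * K)), exp (C10 * K), exp_pos _, exp_pos _, fun ζ hζ r hr => ?_⟩
  have hs := hFinv_mem (F r + ζ)
  have hlogit : |logit (Finv (F r + ζ)) - logit r| ≤ C10 * K := by
    calc _ ≤ C10 * |F (Finv (F r + ζ)) - F r| :=
          abs_logit_sub_le_mul_abs_sub (hu.continuousOn.mono Ioo_subset_Icc_self)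
            (fun x hx => (hneg x hx).ne) hle hF hr hs
      _ ≤ C10 * K := by
          rw [hFinv_right, add_sub_cancel_left]
          exact mul_le_mul_of_nonneg_left hζ hC10.le
  exact exp_neg_mul_le_and_le_exp_mul_of_abs_log_sub_le (mul_pos hr.1 (sub_pos.mpr hr.2))
    (mul_pos hs.1 (sub_pos.mpr hs.2))
    ((abs_log_mul_one_sub_sub_le_abs_logit_sub hr hs).trans hlogit)

theorem stmt_0
    (u F Finv : ℝ → ℝ) (C10 C20 : ℝ)
    (hC10 : 0 < C10) (hC20 : 0 < C20)
    (hu : ContDiffOn ℝ 1 u (Set.Icc 0 1))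
    (hu_lb : ∀ r ∈ Set.Icc (0:ℝ) 1, -C10 * (r * (1 - r)) ≤ u r)
    (hu_ub : ∀ r ∈ Set.Icc (0:ℝ) 1, u r ≤ -C20 * (r * (1 - r)))
    (hF : ∀ r ∈ Set.Ioo (0:ℝ) 1, F r = ∫ η in (1/2 : ℝ)..r, 1 / |u η|)
    (hF_mono : StrictMonoOn F (Set.Ioo 0 1))
    (hFinv_mem : ∀ x : ℝ, Finv x ∈ Set.Ioo (0:ℝ) 1)
    (hFinv_right : ∀ x : ℝ, F (Finv x) = x)
    (hFinv_left : ∀ r ∈ Set.Ioo (0:ℝ) 1, Finv (F r) = r)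
    (K : ℝ) (hK : 0 < K) :
    ∃ C₁ C₂ : ℝ, 0 < C₁ ∧ 0 < C₂ ∧
      ∀ ζ : ℝ, |ζ| ≤ K → ∀ r ∈ Set.Ioo (0:ℝ) 1,
        C₁ * (r * (1 - r)) ≤ Finv (F r + ζ) * (1 - Finv (F r + ζ)) ∧
        Finv (F r + ζ) * (1 - Finv (F r + ζ)) ≤ C₂ * (r * (1 - r)) :=
  stmt_0_general u F Finv C10 C20 hC10 hC20 hu hu_lb hu_ub hF hFinv_mem hFinv_right K
end

section
/- For every constant C ∈ ℝ one has the limit lim_{r→0⁺} F_*^{-1}(F_*(r)+C)/r = e^{C·|u_*'(0)|}. -/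
/-!
Put `a = |u'(0)|` and `G(r) = F(r) - a⁻¹ log r`. The asymptotics of `u` at `0` give
`1/|u(η)| - 1/(aη) = O(η^(β-1))`, which is integrable at `0`, so `G` has a finite limit as
`r → 0⁺`. Hence `F(r) + C → -∞`, so `s = F⁻¹(F(r) + C) → 0⁺`, and since `F(s) = F(r) + C`,
`log s - log r = a (C - (G(s) - G(r))) → a C`.
-/

open Set Filter Real Asymptotics MeasureTheory intervalIntegral
open scoped Topology

lemma integrableOn_Ioc_of_isBigO_rpow {g : ℝ → ℝ} {b β : ℝ} (hβ : 0 < β)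
    (hg : ContinuousOn g (Ioc 0 b)) (hO : g =O[𝓝[>] 0] (· ^ (β - 1))) :
    IntegrableOn g (Ioc 0 b) := by
  rcases le_or_gt b 0 with hb | hb
  · simp [Ioc_eq_empty_of_le hb]
  have hmeas : StronglyMeasurableAtFilter g (𝓝[>] 0) := by
    simpa [nhdsWithin_Ioc_eq_nhdsGT hb] using
      hg.stronglyMeasurableAtFilter_nhdsWithin measurableSet_Ioc 0
  have hrpow : IntegrableAtFilter (· ^ (β - 1)) (𝓝[>] (0 : ℝ)) :=
    ⟨Ioo 0 1, Ioo_mem_nhdsGT zero_lt_one,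
      (intervalIntegral.integrableOn_Ioo_rpow_iff zero_lt_one).2 (by linarith)⟩
  obtain ⟨s, hs, hgs⟩ := hO.integrableAtFilter hmeas hrpow
  obtain ⟨ε, hε, hεs⟩ := mem_nhdsGT_iff_exists_Ioo_subset.1 hs
  have hε' : 0 < min (ε / 2) b := lt_min (half_pos hε) hb
  have hcover : Ioc 0 b ⊆ Ioo 0 ε ∪ Icc (min (ε / 2) b) b := fun x hx => by
    by_cases hx' : x < min (ε / 2) b
    · exact Or.inl ⟨hx.1, hx'.trans_le ((min_le_left _ _).trans (half_le_self hε.le))⟩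
    · exact Or.inr ⟨not_lt.1 hx', hx.2⟩
  refine (integrableOn_union.2 ⟨hgs.mono_set hεs, ?_⟩).mono_set hcover
  exact (hg.mono fun x hx => ⟨hε'.trans_le hx.1, hx.2⟩).integrableOn_Icc

lemma integral_one_div_const_mul {a b r : ℝ} (hb : 0 < b) (hr : 0 < r) :
    ∫ η in b..r, 1 / (a * η) = a⁻¹ * (log r - log b) := by
  have h0 : (0 : ℝ) ∉ uIcc b r := fun h => by
    rcases le_total b r with hbr | hbr
    · rw [uIcc_of_le hbr] at h; linarith [h.1]
    · rw [uIcc_of_ge hbr] at h; linarith [h.1]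
  simp_rw [one_div, mul_inv]
  rw [intervalIntegral.integral_const_mul, integral_inv h0, log_div hr.ne' hb.ne']

lemma exists_tendsto_integral_sub_log {f : ℝ → ℝ} {a b β : ℝ} (ha : a ≠ 0) (hb : 0 < b)
    (hβ : 0 < β) (hf : ContinuousOn f (Ioc 0 b))
    (hO : (fun η => f η - 1 / (a * η)) =O[𝓝[>] 0] (· ^ (β - 1))) :
    ∃ L, Tendsto (fun r => (∫ η in b..r, f η) - a⁻¹ * log r) (𝓝[>] 0) (𝓝 L) := by
  set g : ℝ → ℝ := fun η => f η - 1 / (a * η)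
  have hrecip : ContinuousOn (fun η : ℝ => 1 / (a * η)) (Ioc 0 b) :=
    continuousOn_const.div (continuousOn_const.mul continuousOn_id)
      fun η hη => mul_ne_zero ha hη.1.ne'
  have hg : IntegrableOn g (uIcc 0 b) := by
    rw [uIcc_of_le hb.le, integrableOn_Icc_iff_integrableOn_Ioc]
    exact integrableOn_Ioc_of_isBigO_rpow hβ (hf.sub hrecip) hO
  have hprim : Tendsto (fun r => ∫ η in r..b, g η) (𝓝[>] 0) (𝓝 (∫ η in 0..b, g η)) := by
    have := (continuousOn_primitive_interval_left hg 0 left_mem_uIcc).mono_left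
      (nhdsWithin_mono 0 (Ioc_subset_Icc_self.trans (uIcc_of_le hb.le).symm.subset))
    rwa [nhdsWithin_Ioc_eq_nhdsGT hb] at this
  refine ⟨-(∫ η in 0..b, g η) - a⁻¹ * log b, (hprim.neg.sub_const _).congr' ?_⟩
  filter_upwards [Ioo_mem_nhdsGT hb] with r hr
  have hsub : uIcc b r ⊆ Ioc 0 b := by
    rw [uIcc_of_ge hr.2.le]; exact fun x hx => ⟨hr.1.trans_le hx.1, hx.2⟩
  have hsplit : ∫ η in b..r, g η = (∫ η in b..r, f η) - ∫ η in b..r, 1 / (a * η) :=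
    integral_sub ((hf.mono hsub).intervalIntegrable) ((hrecip.mono hsub).intervalIntegrable)
  rw [integral_symm b r, neg_neg, hsplit, integral_one_div_const_mul hb hr.1]
  ring

lemma isBigO_one_div_sub_one_div_mul {v : ℝ → ℝ} {a c β : ℝ} (ha : 0 < a) (hc : 0 < c)
    (hv : ∀ᶠ η in 𝓝[>] 0, c * η ≤ v η)
    (hO : (fun η => v η - a * η) =O[𝓝[>] 0] (· ^ (1 + β))) :
    (fun η => 1 / v η - 1 / (a * η)) =O[𝓝[>] 0] (· ^ (β - 1)) := by
  obtain ⟨K, hK⟩ := hO.bound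
  refine IsBigO.of_bound (K / (c * a)) ?_
  filter_upwards [hK, hv, self_mem_nhdsWithin] with η hKη hvη (hη : 0 < η)
  have hv0 : 0 < v η := (mul_pos hc hη).trans_le hvη
  have hden : c * a * η ^ 2 ≤ v η * (a * η) := by nlinarith [mul_le_mul_of_nonneg_right hvη hη.le]
  rw [norm_of_nonneg (rpow_nonneg hη.le _)]
  rw [norm_of_nonneg (rpow_nonneg hη.le _)] at hKη
  have hpow : η ^ (1 + β) = η ^ (β - 1) * η ^ 2 := by
    rw [← rpow_two, ← rpow_add hη]; ring_nf
  calc ‖1 / v η - 1 / (a * η)‖ = ‖v η - a * η‖ / (v η * (a * η)) := by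
        rw [div_sub_div _ _ hv0.ne' (mul_pos ha hη).ne', one_mul, mul_one, norm_div,
          norm_sub_rev, norm_of_nonneg (mul_pos hv0 (mul_pos ha hη)).le]
    _ ≤ K * η ^ (1 + β) / (c * a * η ^ 2) := by
        gcongr
        exact (norm_nonneg _).trans hKη
    _ = K / (c * a) * η ^ (β - 1) := by
        rw [hpow]; field_simp

lemma isBigO_one_div_abs_sub_one_div_mul {u : ℝ → ℝ} {c u0' β M r₀ : ℝ} (hc : 0 < c)
    (hr₀ : 0 < r₀) (hu0' : u0' < 0) (hu : ∀ᶠ η in 𝓝[>] 0, u η ≤ -c * η)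
    (hasymp : ∀ r : ℝ, 0 < r → r ≤ r₀ → |u r - u0' * r| ≤ M * r ^ (1 + β)) :
    (fun η => 1 / |u η| - 1 / (|u0'| * η)) =O[𝓝[>] 0] (· ^ (β - 1)) := by
  have hnear : ∀ᶠ η in 𝓝[>] (0 : ℝ), (0 < η ∧ η ≤ r₀) ∧ u η ≤ -c * η :=
    Eventually.and (Ioc_mem_nhdsGT hr₀) hu
  refine isBigO_one_div_sub_one_div_mul (abs_pos.2 hu0'.ne) hc
    (hu.mono fun η hη => by linarith [neg_le_abs (u η)]) (IsBigO.of_bound M ?_)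
  filter_upwards [hnear] with η ⟨⟨hη, hηr₀⟩, huη⟩
  have hu_neg : u η < 0 := huη.trans_lt (by nlinarith)
  rw [norm_of_nonneg (rpow_nonneg hη.le _), abs_of_neg hu_neg, abs_of_neg hu0', Real.norm_eq_abs,
    ← abs_neg]
  convert hasymp η hη hηr₀ using 2
  ring

lemma tendsto_rightInverse_atBot_nhdsGT {F Finv : ℝ → ℝ} {a b : ℝ}
    (hF : MonotoneOn F (Ioo a b)) (hmem : ∀ x, Finv x ∈ Ioo a b) (hright : ∀ x, F (Finv x) = x) :
    Tendsto Finv atBot (𝓝[>] a) := by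
  have hab : a < b := (hmem 0).1.trans (hmem 0).2
  refine tendsto_nhdsWithin_iff.2 ⟨tendsto_order.2 ⟨fun c hc => ?_, fun c hc => ?_⟩,
    Eventually.of_forall fun x => (hmem x).1⟩
  · exact Eventually.of_forall fun x => hc.trans (hmem x).1
  set ε := min c ((a + b) / 2)
  have hε : ε ∈ Ioo a b := ⟨lt_min hc (by linarith), (min_le_right _ _).trans_lt (by linarith)⟩
  filter_upwards [eventually_lt_atBot (F ε)] with x hx
  by_contra! hεx
  have := hF hε (hmem x) ((min_le_left _ _).trans hεx)
  rw [hright] at this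
  linarith

lemma tendsto_atBot_of_tendsto_sub_log {F : ℝ → ℝ} {a L : ℝ} (ha : 0 < a)
    (hF : Tendsto (fun r => F r - a⁻¹ * log r) (𝓝[>] 0) (𝓝 L)) :
    Tendsto F (𝓝[>] 0) atBot := by
  have hlog := tendsto_log_nhdsGT_zero.const_mul_atBot (inv_pos.2 ha)
  simpa using hlog.atBot_add hF

lemma tendsto_div_of_tendsto_sub_log {F s : ℝ → ℝ} {a C L : ℝ} (ha : a ≠ 0)
    (hF : Tendsto (fun r => F r - a⁻¹ * log r) (𝓝[>] 0) (𝓝 L))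
    (hs : Tendsto s (𝓝[>] 0) (𝓝[>] 0)) (hFs : ∀ r, F (s r) = F r + C) :
    Tendsto (fun r => s r / r) (𝓝[>] 0) (𝓝 (exp (a * C))) := by
  set G := fun r => F r - a⁻¹ * log r
  have hlog : ∀ r, log (s r) - log r = a * (C - (G (s r) - G r)) := fun r => by
    simp only [G, hFs]; field_simp; ring
  have hlim : Tendsto (fun r => a * (C - (G (s r) - G r))) (𝓝[>] 0) (𝓝 (a * C)) := by
    simpa using tendsto_const_nhds.mul (tendsto_const_nhds.sub ((hF.comp hs).sub hF))
  refine ((continuous_exp.tendsto _).comp hlim).congr' ?_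
  filter_upwards [self_mem_nhdsWithin, tendsto_nhdsWithin_iff.1 hs |>.2] with r (hr : 0 < r) hsr
  rw [Function.comp_apply, ← hlog, exp_sub, exp_log hsr, exp_log hr]

theorem stmt_1_general
    (u F Finv : ℝ → ℝ) (C20 : ℝ)
    (hC20 : 0 < C20)
    (hu : ContDiffOn ℝ 1 u (Set.Icc 0 1))
    (hu_ub : ∀ r ∈ Set.Icc (0:ℝ) 1, u r ≤ -C20 * (r * (1 - r)))
    (hF : ∀ r ∈ Set.Ioo (0:ℝ) 1, F r = ∫ η in (1/2 : ℝ)..r, 1 / |u η|)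
    (hF_mono : StrictMonoOn F (Set.Ioo 0 1))
    (hFinv_mem : ∀ x : ℝ, Finv x ∈ Set.Ioo (0:ℝ) 1)
    (hFinv_right : ∀ x : ℝ, F (Finv x) = x)
    -- u'(0), which is negative, and the asymptotic assumption near r = 0
    (u0' : ℝ)
    (hu0'_neg : u0' < 0)
    (β M r₀ : ℝ) (hβ : β ∈ Set.Ioc (0:ℝ) 1) (hr₀ : r₀ ∈ Set.Ioo (0:ℝ) 1)
    (hasymp : ∀ r : ℝ, 0 < r → r ≤ r₀ → |u r - u0' * r| ≤ M * r ^ (1 + β))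
    (C : ℝ) :
    Filter.Tendsto (fun r : ℝ => Finv (F r + C) / r)
      (nhdsWithin 0 (Set.Ioi 0)) (nhds (Real.exp (C * |u0'|))) := by
  have ha : 0 < |u0'| := abs_pos.2 hu0'_neg.ne
  have hu_neg : ∀ r ∈ Ioo (0 : ℝ) 1, u r < 0 := fun r hr =>
    (hu_ub r (Ioo_subset_Icc_self hr)).trans_lt
      (by linarith [mul_pos hC20 (mul_pos hr.1 (sub_pos.2 hr.2))])
  have hcont : ContinuousOn (fun η => 1 / |u η|) (Ioc 0 (1 / 2)) :=
    continuousOn_const.div (hu.continuousOn.mono fun η hη => ⟨hη.1.le, by linarith [hη.2]⟩).abs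
      fun η hη => abs_ne_zero.2 (hu_neg η ⟨hη.1, by linarith [hη.2]⟩).ne
  have hnear : ∀ᶠ η in 𝓝[>] (0 : ℝ), 0 < η ∧ η ≤ 1 / 2 := Ioc_mem_nhdsGT (by norm_num)
  have hupper : ∀ᶠ η in 𝓝[>] (0 : ℝ), u η ≤ -(C20 / 2) * η :=
    hnear.mono fun η ⟨hη, hη_half⟩ => by
      nlinarith [hu_ub η ⟨hη.le, by linarith⟩,
        mul_nonneg (mul_pos hC20 hη).le (sub_nonneg.2 hη_half)]
  obtain ⟨L, hL⟩ := exists_tendsto_integral_sub_log ha.ne' (by norm_num) hβ.1 hcont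
    (isBigO_one_div_abs_sub_one_div_mul (half_pos hC20) hr₀.1 hu0'_neg hupper hasymp)
  have hG : Tendsto (fun r => F r - |u0'|⁻¹ * log r) (𝓝[>] 0) (𝓝 L) :=
    hL.congr' (hnear.mono fun r ⟨hr, hr_half⟩ => by simp only [hF r ⟨hr, by linarith⟩])
  have hs := (tendsto_rightInverse_atBot_nhdsGT hF_mono.monotoneOn hFinv_mem hFinv_right).comp
    (tendsto_atBot_add_const_right _ C (tendsto_atBot_of_tendsto_sub_log ha hG))
  simpa only [mul_comm |u0'|, Function.comp_def] using
    tendsto_div_of_tendsto_sub_log ha.ne' hG hs fun r => hFinv_right (F r + C)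

theorem stmt_1
    (u F Finv : ℝ → ℝ) (C10 C20 : ℝ)
    (hC10 : 0 < C10) (hC20 : 0 < C20)
    (hu : ContDiffOn ℝ 1 u (Set.Icc 0 1))
    (hu_lb : ∀ r ∈ Set.Icc (0:ℝ) 1, -C10 * (r * (1 - r)) ≤ u r)
    (hu_ub : ∀ r ∈ Set.Icc (0:ℝ) 1, u r ≤ -C20 * (r * (1 - r)))
    (hF : ∀ r ∈ Set.Ioo (0:ℝ) 1, F r = ∫ η in (1/2 : ℝ)..r, 1 / |u η|)
    (hF_mono : StrictMonoOn F (Set.Ioo 0 1))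
    (hFinv_mem : ∀ x : ℝ, Finv x ∈ Set.Ioo (0:ℝ) 1)
    (hFinv_right : ∀ x : ℝ, F (Finv x) = x)
    (hFinv_left : ∀ r ∈ Set.Ioo (0:ℝ) 1, Finv (F r) = r)
    -- u'(0), which is negative, and the asymptotic assumption near r = 0
    (u0' : ℝ) (hu0' : HasDerivWithinAt u u0' (Set.Icc 0 1) 0)
    (hu0'_neg : u0' < 0)
    (β M r₀ : ℝ) (hβ : β ∈ Set.Ioc (0:ℝ) 1) (hM : 0 < M) (hr₀ : r₀ ∈ Set.Ioo (0:ℝ) 1)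
    (hasymp : ∀ r : ℝ, 0 < r → r ≤ r₀ → |u r - u0' * r| ≤ M * r ^ (1 + β))
    (C : ℝ) :
    Filter.Tendsto (fun r : ℝ => Finv (F r + C) / r)
      (nhdsWithin 0 (Set.Ioi 0)) (nhds (Real.exp (C * |u0'|))) :=
  stmt_1_general u F Finv C20 hC20 hu hu_ub hF hF_mono hFinv_mem hFinv_right u0' hu0'_neg β M r₀ hβ
    hr₀ hasymp C
end

section
/- For every constant C ∈ ℝ one has the limit lim_{r→1⁻} [1 − F_*^{-1}(F_*(r)−C)]/(1−r) = e^{C·u_*'(1)}. -/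
/-!
Near `r = 1` the integrand `1 / |u|` of `F` differs from `1 / (u'(1) (1 - r))` by
`O((1 - r) ^ (β - 1))`, which is integrable, so `log (1 - r) + u'(1) F(r)` has a finite limit as
`r → 1⁻`. Hence `F(r) → ∞`, so `s = F⁻¹(F(r) - C) → 1⁻` too, and
`log ((1 - s) / (1 - r)) - u'(1) C` is the difference of the values of that convergent function
at `s` and at `r`, which tends to `0`.
-/

open MeasureTheory Set Filter Topology Real

theorem MonotoneOn.tendsto_atTop_nhdsLT_of_rightInverse {F Finv : ℝ → ℝ} {a b : ℝ}
    (hF : MonotoneOn F (Ioo a b)) (hFinv_mem : ∀ x, Finv x ∈ Ioo a b)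
    (hFinv_right : ∀ x, F (Finv x) = x) :
    Tendsto Finv atTop (𝓝[<] b) := by
  refine tendsto_nhdsWithin_of_tendsto_nhds_of_eventually_within _ ?_
    (Eventually.of_forall fun x => (hFinv_mem x).2)
  refine tendsto_order.2 ⟨fun c hc => ?_,
    fun c hc => Eventually.of_forall fun x => (hFinv_mem x).2.trans hc⟩
  set ρ := max c (Finv 0)
  have hρ : ρ ∈ Ioo a b :=
    ⟨(hFinv_mem 0).1.trans_le (le_max_right _ _), max_lt hc (hFinv_mem 0).2⟩
  filter_upwards [eventually_gt_atTop (F ρ)] with x hx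
  by_contra! hxc
  have := hF (hFinv_mem x) hρ (hxc.trans (le_max_left _ _))
  rw [hFinv_right] at this
  linarith

theorem abs_mul_one_div_sub_inv_le {k v t c M β : ℝ} (ht : 0 < t) (hc : 0 < c)
    (hv : c * t ≤ v) (h : |v - k * t| ≤ M * t ^ (1 + β)) :
    |k * (1 / v) - t⁻¹| ≤ M / c * t ^ (β - 1) := by
  have hv0 : 0 < v := (mul_pos hc ht).trans_le hv
  have hrpow : t ^ (1 + β) = t ^ 2 * t ^ (β - 1) := by
    rw [show 1 + β = 2 + (β - 1) by ring, rpow_add ht, rpow_two]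
  calc |k * (1 / v) - t⁻¹| = |v - k * t| / (v * t) := by
        rw [show k * (1 / v) - t⁻¹ = -(v - k * t) / (v * t) by field_simp; ring, abs_div,
          abs_neg, abs_of_pos (mul_pos hv0 ht)]
    _ ≤ M * t ^ (1 + β) / (c * t * t) :=
        div_le_div₀ ((abs_nonneg _).trans h) h (by positivity) (by gcongr)
    _ = M / c * t ^ (β - 1) := by
        rw [hrpow]; field_simp

theorem integrableOn_Ioo_of_abs_le_rpow_one_sub {g : ℝ → ℝ} {a b K β : ℝ} (hβ : 0 < β)
    (hab : a ≤ b) (hb : b < 1) (hg : ContinuousOn g (Ico a 1))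
    (hbound : ∀ η ∈ Ioo b 1, |g η| ≤ K * (1 - η) ^ (β - 1)) :
    IntegrableOn g (Ioo a 1) := by
  have hmajor : IntegrableOn (fun η => K * (1 - η) ^ (β - 1)) (Ioo b 1) := by
    have h := (intervalIntegral.intervalIntegrable_rpow' (a := 1 - b) (b := 1 - 1)
      (by linarith : -1 < β - 1)).comp_sub_left 1
    simp only [sub_sub_cancel, sub_self, sub_zero] at h
    exact (intervalIntegrable_iff_integrableOn_Ioo_of_le hb.le).1 (h.const_mul K)
  have hnear : IntegrableOn g (Ioo b 1) :=
    hmajor.mono'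
      ((hg.mono fun η hη => ⟨hab.trans hη.1.le, hη.2⟩).aestronglyMeasurable
        measurableSet_Ioo)
      (ae_restrict_of_forall_mem measurableSet_Ioo fun η hη =>
        (norm_eq_abs _).trans_le (hbound η hη))
  have hfar : IntegrableOn g (Icc a b) := (hg.mono (Icc_subset_Ico_right hb)).integrableOn_Icc
  refine (hfar.union hnear).mono_set fun η hη => ?_
  rcases le_or_gt η b with h | h
  exacts [Or.inl ⟨hη.1.le, h⟩, Or.inr ⟨h, hη.2⟩]

theorem tendsto_log_one_sub_add_integral {f : ℝ → ℝ} {a : ℝ} (ha : a < 1)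
    (hf : IntegrableOn (fun η => f η - (1 - η)⁻¹) (Ioo a 1)) :
    Tendsto (fun r => log (1 - r) + ∫ η in a..r, f η) (𝓝[<] 1)
      (𝓝 ((∫ η in a..1, f η - (1 - η)⁻¹) + log (1 - a))) := by
  set g := fun η => f η - (1 - η)⁻¹
  have hG : Tendsto (fun r => ∫ η in a..r, g η) (𝓝[<] 1) (𝓝 (∫ η in a..1, g η)) := by
    have h := intervalIntegral.continuousOn_primitive_interval (μ := volume) (f := g)
      (by rwa [uIcc_of_le ha.le, integrableOn_Icc_iff_integrableOn_Ioo])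
    rw [uIcc_of_le ha.le] at h
    exact (h 1 (right_mem_Icc.2 ha.le)).mono_left (nhdsWithin_le_iff.2 (Icc_mem_nhdsLT ha))
  refine (hG.add_const (log (1 - a))).congr' ?_
  filter_upwards [Ioo_mem_nhdsLT ha] with r hr
  have hg : IntervalIntegrable g volume a r :=
    (intervalIntegrable_iff_integrableOn_Ioc_of_le hr.1.le).2
      (hf.mono_set (Ioc_subset_Ioo_right hr.2))
  have hpos : ∀ η ∈ uIcc a r, 0 < 1 - η := fun η hη => by
    rw [uIcc_of_le hr.1.le] at hη; linarith [hη.2, hr.2]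
  have hinv : IntervalIntegrable (fun η => (1 - η)⁻¹) volume a r :=
    ((continuousOn_const.sub continuousOn_id).inv₀
      fun η hη => (hpos η hη).ne').intervalIntegrable
  have hlog : ∫ η in a..r, (1 - η)⁻¹ = log (1 - a) - log (1 - r) := by
    rw [intervalIntegral.integral_comp_sub_left (fun x => x⁻¹), integral_inv, log_div]
    exacts [(sub_pos.2 ha).ne', (sub_pos.2 hr.2).ne',
      fun h => by rw [uIcc_of_le (by linarith [hr.1])] at h; linarith [h.1, hr.2]]
  have hsplit : ∫ η in a..r, f η = (∫ η in a..r, g η) + ∫ η in a..r, (1 - η)⁻¹ := by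
    rw [← intervalIntegral.integral_add hg hinv]
    simp [g]
  rw [hsplit, hlog]
  ring

theorem tendsto_atTop_of_tendsto_log_one_sub_add_mul {F : ℝ → ℝ} {k c : ℝ} (hk : 0 < k)
    (hF : Tendsto (fun r => log (1 - r) + k * F r) (𝓝[<] 1) (𝓝 c)) :
    Tendsto F (𝓝[<] 1) atTop := by
  have hsub : Tendsto (fun r : ℝ => 1 - r) (𝓝[<] 1) (𝓝[>] 0) :=
    tendsto_nhdsWithin_of_tendsto_nhds_of_eventually_within _
      (by simpa using ((continuous_sub_left (1 : ℝ)).tendsto 1).mono_left nhdsWithin_le_nhds)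
      (eventually_nhdsWithin_of_forall fun r (hr : r < 1) => sub_pos.2 hr)
  have hlog : Tendsto (fun r => -log (1 - r)) (𝓝[<] 1) atTop :=
    tendsto_neg_atBot_atTop.comp (tendsto_log_nhdsGT_zero.comp hsub)
  refine (tendsto_const_mul_atTop_of_pos hk).1 ((hlog.atTop_add hF).congr fun r => ?_)
  ring

theorem tendsto_one_sub_comp_sub_div_one_sub {F Finv : ℝ → ℝ} {k c : ℝ} (hk : 0 < k)
    (hF : Tendsto (fun r => log (1 - r) + k * F r) (𝓝[<] 1) (𝓝 c))
    (hFinv : Tendsto Finv atTop (𝓝[<] 1)) (hFinv_right : ∀ x, F (Finv x) = x) (C : ℝ) :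
    Tendsto (fun r => (1 - Finv (F r - C)) / (1 - r)) (𝓝[<] 1) (𝓝 (exp (C * k))) := by
  set H := fun r => log (1 - r) + k * F r
  set s := fun r => Finv (F r - C)
  have hs : Tendsto s (𝓝[<] 1) (𝓝[<] 1) :=
    hFinv.comp ((tendsto_atTop_of_tendsto_log_one_sub_add_mul hk hF).atTop_add tendsto_const_nhds)
  have hlim : Tendsto (fun r => exp (H (s r) - H r + C * k)) (𝓝[<] 1) (𝓝 (exp (C * k))) := by
    simpa [Function.comp_def] using
      (continuous_exp.tendsto _).comp (((hF.comp hs).sub hF).add_const (C * k))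
  refine hlim.congr' ?_
  filter_upwards [self_mem_nhdsWithin, hs self_mem_nhdsWithin]
    with r (hr : r < 1) (hsr : s r < 1)
  have hHs : H (s r) - H r + C * k = log (1 - s r) - log (1 - r) := by
    simp only [H, s, hFinv_right]
    ring
  rw [hHs, exp_sub, exp_log (sub_pos.2 hsr), exp_log (sub_pos.2 hr)]

theorem stmt_2_general
    (u F Finv : ℝ → ℝ) (C20 : ℝ)
    (hC20 : 0 < C20)
    (hu : ContDiffOn ℝ 1 u (Set.Icc 0 1))
    (hu_ub : ∀ r ∈ Set.Icc (0:ℝ) 1, u r ≤ -C20 * (r * (1 - r)))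
    (hF : ∀ r ∈ Set.Ioo (0:ℝ) 1, F r = ∫ η in (1/2 : ℝ)..r, 1 / |u η|)
    (hF_mono : StrictMonoOn F (Set.Ioo 0 1))
    (hFinv_mem : ∀ x : ℝ, Finv x ∈ Set.Ioo (0:ℝ) 1)
    (hFinv_right : ∀ x : ℝ, F (Finv x) = x)
    -- u'(1), which is positive, and the asymptotic assumption near r = 1
    (u1' : ℝ)
    (hu1'_pos : 0 < u1')
    (β M r₁ : ℝ) (hβ : β ∈ Set.Ioc (0:ℝ) 1) (hr₁ : r₁ ∈ Set.Ioo (0:ℝ) 1)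
    (hasymp : ∀ r : ℝ, r₁ ≤ r → r < 1 → |u r - u1' * (r - 1)| ≤ M * (1 - r) ^ (1 + β))
    (C : ℝ) :
    Filter.Tendsto (fun r : ℝ => (1 - Finv (F r - C)) / (1 - r))
      (nhdsWithin 1 (Set.Iio 1)) (nhds (Real.exp (C * u1'))) := by
  have hu_neg : ∀ η ∈ Ioo (0:ℝ) 1, u η < 0 := fun η hη => by
    nlinarith [hu_ub η (Ioo_subset_Icc_self hη), mul_pos hC20 (mul_pos hη.1 (sub_pos.2 hη.2))]
  have hIco : Ico (1/2 : ℝ) 1 ⊆ Ioo 0 1 := fun η hη => ⟨by linarith [hη.1], hη.2⟩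
  have hg_cont : ContinuousOn (fun η => u1' * (1 / |u η|) - (1 - η)⁻¹) (Ico (1/2) 1) :=
    (continuousOn_const.mul (continuousOn_const.div
      (hu.continuousOn.mono (hIco.trans Ioo_subset_Icc_self)).abs
      fun η hη => (abs_pos.2 (hu_neg η (hIco hη)).ne).ne')).sub
      ((continuousOn_const.sub continuousOn_id).inv₀ fun η hη => (sub_pos.2 hη.2).ne')
  have hg_bound : ∀ η ∈ Ioo (max r₁ (1/2)) 1,
      |u1' * (1 / |u η|) - (1 - η)⁻¹| ≤ M / (C20 / 2) * (1 - η) ^ (β - 1) := by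
    intro η hη
    have hη_half : 1/2 ≤ η := (le_max_right _ _).trans hη.1.le
    have hη_mem : η ∈ Ioo (0:ℝ) 1 := ⟨by linarith, hη.2⟩
    rw [abs_of_neg (hu_neg η hη_mem)]
    refine abs_mul_one_div_sub_inv_le (sub_pos.2 hη.2) (half_pos hC20) ?_ ?_
    · nlinarith [hu_ub η (Ioo_subset_Icc_self hη_mem),
        mul_nonneg (mul_nonneg hC20.le (sub_nonneg.2 hη_half)) (sub_pos.2 hη.2).le]
    · rw [← abs_neg]
      convert hasymp η ((le_max_left _ _).trans hη.1.le) hη.2 using 2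
      ring
  have hg_int : IntegrableOn (fun η => u1' * (1 / |u η|) - (1 - η)⁻¹) (Ioo (1/2) 1) :=
    integrableOn_Ioo_of_abs_le_rpow_one_sub hβ.1 (le_max_right _ _) (max_lt hr₁.2 (by norm_num))
      hg_cont hg_bound
  refine tendsto_one_sub_comp_sub_div_one_sub hu1'_pos
    ((tendsto_log_one_sub_add_integral (by norm_num) hg_int).congr' ?_)
    (hF_mono.monotoneOn.tendsto_atTop_nhdsLT_of_rightInverse hFinv_mem hFinv_right) hFinv_right C
  filter_upwards [Ioo_mem_nhdsLT zero_lt_one] with r hr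
  rw [hF r hr, intervalIntegral.integral_const_mul]

theorem stmt_2
    (u F Finv : ℝ → ℝ) (C10 C20 : ℝ)
    (hC10 : 0 < C10) (hC20 : 0 < C20)
    (hu : ContDiffOn ℝ 1 u (Set.Icc 0 1))
    (hu_lb : ∀ r ∈ Set.Icc (0:ℝ) 1, -C10 * (r * (1 - r)) ≤ u r)
    (hu_ub : ∀ r ∈ Set.Icc (0:ℝ) 1, u r ≤ -C20 * (r * (1 - r)))
    (hF : ∀ r ∈ Set.Ioo (0:ℝ) 1, F r = ∫ η in (1/2 : ℝ)..r, 1 / |u η|)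
    (hF_mono : StrictMonoOn F (Set.Ioo 0 1))
    (hFinv_mem : ∀ x : ℝ, Finv x ∈ Set.Ioo (0:ℝ) 1)
    (hFinv_right : ∀ x : ℝ, F (Finv x) = x)
    (hFinv_left : ∀ r ∈ Set.Ioo (0:ℝ) 1, Finv (F r) = r)
    -- u'(1), which is positive, and the asymptotic assumption near r = 1
    (u1' : ℝ) (hu1' : HasDerivWithinAt u u1' (Set.Icc 0 1) 1)
    (hu1'_pos : 0 < u1')
    (β M r₁ : ℝ) (hβ : β ∈ Set.Ioc (0:ℝ) 1) (hM : 0 < M) (hr₁ : r₁ ∈ Set.Ioo (0:ℝ) 1)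
    (hasymp : ∀ r : ℝ, r₁ ≤ r → r < 1 → |u r - u1' * (r - 1)| ≤ M * (1 - r) ^ (1 + β))
    (C : ℝ) :
    Filter.Tendsto (fun r : ℝ => (1 - Finv (F r - C)) / (1 - r))
      (nhdsWithin 1 (Set.Iio 1)) (nhds (Real.exp (C * u1'))) :=
  stmt_2_general u F Finv C20 hC20 hu hu_ub hF hF_mono hFinv_mem hFinv_right u1' hu1'_pos β M r₁ hβ
    hr₁ hasymp C
end

section
/- There is an absolute constant C > 0 such that the following holds: let δ ∈ [0,1/2], let S : [0,1] → [0,1] satisfy |S(r) − r| ≤ δ·r(1−r) for all r ∈ [0,1], and let a ∈ C[0,1] be continuously differentiable on (0,1) with ‖a‖₁ := sup_{0<r<1} r(1−r)|a'(r)| < ∞. Then max_{0≤r≤1} |a(S(r)) − a(r)| ≤ C·‖a‖₁·δ. -/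
/-!
If `|s - r| ≤ δ r(1-r)` with `δ ≤ 1/2`, then the whole segment between `r` and `s` lies in
`[r/2, (1+r)/2]`, where the weight `t(1-t)` is at least `r(1-r)/4`. Hence `|a'| ≤ 4N/(r(1-r))`
on that segment, and the mean value inequality gives
`|a s - a r| ≤ 4N/(r(1-r)) · δ r(1-r) = 4Nδ`.
-/

open Set

lemma mem_Icc_half_of_abs_sub_le {δ r s : ℝ} (hδ : δ ≤ 1 / 2) (hr : r ∈ Icc (0 : ℝ) 1)
    (hs : |s - r| ≤ δ * (r * (1 - r))) : s ∈ Icc (r / 2) ((1 + r) / 2) := by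
  obtain ⟨hr0, hr1⟩ := hr
  have hδr : δ * (r * (1 - r)) ≤ 1 / 2 * (r * (1 - r)) :=
    mul_le_mul_of_nonneg_right hδ (mul_nonneg hr0 (by linarith))
  obtain ⟨hlo, hhi⟩ := abs_le.mp hs
  constructor <;> nlinarith

lemma quarter_mul_le_mul_one_sub {r t : ℝ} (hr : r ∈ Icc (0 : ℝ) 1)
    (ht : t ∈ Icc (r / 2) ((1 + r) / 2)) : r * (1 - r) / 4 ≤ t * (1 - t) := by
  obtain ⟨hr0, hr1⟩ := hr
  obtain ⟨hlo, hhi⟩ := ht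
  nlinarith [mul_le_mul hlo (by linarith : (1 - r) / 2 ≤ 1 - t) (by linarith) (by linarith)]

theorem abs_sub_le_of_weighted_deriv_bound {a a' : ℝ → ℝ} {N δ r s : ℝ}
    (hderiv : ∀ t ∈ Ioo (0 : ℝ) 1, HasDerivAt a (a' t) t)
    (hN : ∀ t ∈ Ioo (0 : ℝ) 1, t * (1 - t) * |a' t| ≤ N)
    (hδ0 : 0 ≤ δ) (hδ : δ ≤ 1 / 2) (hr : r ∈ Icc (0 : ℝ) 1)
    (hs : |s - r| ≤ δ * (r * (1 - r))) :
    |a s - a r| ≤ 4 * N * δ := by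
  have hN0 : 0 ≤ N := le_trans (by positivity) (hN (1 / 2) (by norm_num))
  obtain ⟨hr0, hr1⟩ := hr
  rcases (mul_nonneg hr0 (sub_nonneg.mpr hr1)).eq_or_lt with hw | hw
  · have : s = r := sub_eq_zero.mp (abs_nonpos_iff.mp (by simpa [← hw] using hs))
    simp only [this, sub_self, abs_zero]
    positivity
  have hsegment : uIcc r s ⊆ Icc (r / 2) ((1 + r) / 2) :=
    uIcc_subset_Icc ⟨by linarith, by linarith⟩ (mem_Icc_half_of_abs_sub_le hδ ⟨hr0, hr1⟩ hs)
  have hinterior : uIcc r s ⊆ Ioo (0 : ℝ) 1 := fun t ht => by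
    obtain ⟨hlo, hhi⟩ := hsegment ht
    have : 0 < r := by nlinarith
    have : r < 1 := by nlinarith
    exact ⟨by linarith, by linarith⟩
  have hbound : ∀ t ∈ uIcc r s, ‖a' t‖ ≤ 4 * N / (r * (1 - r)) := fun t ht => by
    rw [Real.norm_eq_abs, le_div_iff₀ hw]
    nlinarith [quarter_mul_le_mul_one_sub ⟨hr0, hr1⟩ (hsegment ht), hN t (hinterior ht),
      abs_nonneg (a' t)]
  have hmvt := (convex_uIcc r s).norm_image_sub_le_of_norm_hasDerivWithin_le
    (fun t ht => (hderiv t (hinterior ht)).hasDerivWithinAt) hbound left_mem_uIcc right_mem_uIcc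
  rw [Real.norm_eq_abs, Real.norm_eq_abs] at hmvt
  calc |a s - a r| ≤ 4 * N / (r * (1 - r)) * |s - r| := hmvt
    _ ≤ 4 * N / (r * (1 - r)) * (δ * (r * (1 - r))) := by gcongr
    _ = 4 * N * δ := by rw [mul_comm δ, ← mul_assoc, div_mul_cancel₀ _ hw.ne']

theorem stmt_8 :
    ∃ C : ℝ, 0 < C ∧
      ∀ δ : ℝ, δ ∈ Set.Icc (0:ℝ) (1/2) →
      ∀ S : ℝ → ℝ,
        (∀ r ∈ Set.Icc (0:ℝ) 1, S r ∈ Set.Icc (0:ℝ) 1) →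
        (∀ r ∈ Set.Icc (0:ℝ) 1, |S r - r| ≤ δ * (r * (1 - r))) →
      ∀ a a' : ℝ → ℝ,
        ContinuousOn a (Set.Icc 0 1) →
        (∀ r ∈ Set.Ioo (0:ℝ) 1, HasDerivAt a (a' r) r) →
        ContinuousOn a' (Set.Ioo 0 1) →
      ∀ N : ℝ, (∀ r ∈ Set.Ioo (0:ℝ) 1, r * (1 - r) * |a' r| ≤ N) →
      ∀ r ∈ Set.Icc (0:ℝ) 1, |a (S r) - a r| ≤ C * N * δ :=
  ⟨4, by norm_num, fun _ hδ S _ hS _ _ _ hderiv _ _ hN r hr =>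
    abs_sub_le_of_weighted_deriv_bound hderiv hN hδ.1 hδ.2 hr (hS r hr)⟩
end

section
/- There is an absolute constant C > 0 such that the following holds: let δ ∈ [0,1/2], let S : [0,1] → [0,1] be differentiable on (0,1) with |S(r) − r| ≤ δ·r(1−r) for all r ∈ [0,1] and |S'(r) − 1| ≤ δ for all r ∈ (0,1), and let a ∈ C[0,1] be twice continuously differentiable on (0,1) with ‖a‖₂ := sup_{0<r<1} r(1−r)|a'(r)| + sup_{0<r<1} r²(1−r)²|a''(r)| < ∞. Then sup_{0<r<1} r(1−r)·|a'(S(r))·S'(r) − a'(r)| ≤ C·‖a‖₂·δ. -/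
/- STATEMENT 9: There is an absolute constant C > 0 such that: for δ ∈ [0,1/2],
S : [0,1] → [0,1] differentiable on (0,1) with |S(r) − r| ≤ δ·r(1−r) and |S'(r) − 1| ≤ δ,
and a ∈ C[0,1] twice continuously differentiable on (0,1) with
‖a‖₂ = sup r(1−r)|a'| + sup r²(1−r)²|a''| < ∞, one has
sup_{0<r<1} r(1−r)·|a'(S(r))·S'(r) − a'(r)| ≤ C·‖a‖₂·δ. -/
set_option maxHeartbeats 1600000 in
theorem stmt_9 :
    ∃ C : ℝ, 0 < C ∧
      ∀ δ : ℝ, δ ∈ Set.Icc (0:ℝ) (1/2) →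
      ∀ S S' : ℝ → ℝ,
        (∀ r ∈ Set.Icc (0:ℝ) 1, S r ∈ Set.Icc (0:ℝ) 1) →
        (∀ r ∈ Set.Icc (0:ℝ) 1, |S r - r| ≤ δ * (r * (1 - r))) →
        (∀ r ∈ Set.Ioo (0:ℝ) 1, HasDerivAt S (S' r) r) →
        (∀ r ∈ Set.Ioo (0:ℝ) 1, |S' r - 1| ≤ δ) →
      ∀ a a' a'' : ℝ → ℝ,
        ContinuousOn a (Set.Icc 0 1) →
        (∀ r ∈ Set.Ioo (0:ℝ) 1, HasDerivAt a (a' r) r) →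
        (∀ r ∈ Set.Ioo (0:ℝ) 1, HasDerivAt a' (a'' r) r) →
        ContinuousOn a'' (Set.Ioo 0 1) →
      ∀ N₁ N₂ : ℝ,
        (∀ r ∈ Set.Ioo (0:ℝ) 1, r * (1 - r) * |a' r| ≤ N₁) →
        (∀ r ∈ Set.Ioo (0:ℝ) 1, r ^ 2 * (1 - r) ^ 2 * |a'' r| ≤ N₂) →
      ∀ r ∈ Set.Ioo (0:ℝ) 1,
        r * (1 - r) * |a' (S r) * S' r - a' r| ≤ C * (N₁ + N₂) * δ := by
  refine ⟨16, by norm_num, ?_⟩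
  intro δ hδ S S' hSmap hSclose hSd hS'δ a a' a'' ha hda hda' ha''c N₁ N₂ hN1 hN2 r hr
  obtain ⟨hδ0, hδ2⟩ := hδ
  obtain ⟨hr0, hr1⟩ := hr
  have hr1' : 0 < 1 - r := by linarith
  have hrIcc : r ∈ Set.Icc (0:ℝ) 1 := ⟨hr0.le, hr1.le⟩
  have hclose := hSclose r hrIcc
  have habs := abs_le.mp hclose
  have hbound : δ * (r * (1 - r)) ≤ r * (1 - r) / 2 := by
    have := mul_le_mul_of_nonneg_right hδ2 (le_of_lt (mul_pos hr0 hr1'))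
    linarith
  have hS0 : r / 2 ≤ S r := by nlinarith [habs.1]
  have hS1 : S r ≤ (1 + r) / 2 := by nlinarith [habs.2]
  have hSIoo : S r ∈ Set.Ioo (0:ℝ) 1 := ⟨by linarith, by linarith⟩
  have hN1nn : 0 ≤ N₁ := le_trans (by positivity) (hN1 r ⟨hr0, hr1⟩)
  have hN2nn : 0 ≤ N₂ := le_trans (by positivity) (hN2 r ⟨hr0, hr1⟩)
  -- first term bound
  have h4 : r * (1 - r) ≤ 4 * (S r * (1 - S r)) := by nlinarith
  have hT1 : r * (1 - r) * |a' (S r)| ≤ 4 * N₁ := by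
    have := mul_le_mul_of_nonneg_right h4 (abs_nonneg (a' (S r)))
    have hb := hN1 (S r) hSIoo
    nlinarith
  -- MVT bound on |a'(S r) - a' r|
  have key : r * (1 - r) * |a' (S r) - a' r| ≤ 16 * N₂ * δ := by
    have main : ∀ c ∈ Set.Ioo (0:ℝ) 1, r / 2 ≤ c → c ≤ (1 + r) / 2 →
        a' (S r) - a' r = a'' c * (S r - r) → r * (1 - r) * |a' (S r) - a' r| ≤ 16 * N₂ * δ := by
      intro c hc hc1 hc2 heq
      have hb := hN2 c hc
      have hcc : r * (1 - r) ≤ 4 * (c * (1 - c)) := by nlinarith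
      have h16 : r ^ 2 * (1 - r) ^ 2 ≤ 16 * (c ^ 2 * (1 - c) ^ 2) := by
        have hP : (0:ℝ) ≤ r * (1 - r) := by positivity
        have := mul_self_le_mul_self hP hcc
        nlinarith
      rw [heq, abs_mul]
      have h1 : |S r - r| ≤ δ * (r * (1 - r)) := hclose
      calc r * (1 - r) * (|a'' c| * |S r - r|)
          ≤ r * (1 - r) * (|a'' c| * (δ * (r * (1 - r)))) := by
            apply mul_le_mul_of_nonneg_left _ (by positivity)
            exact mul_le_mul_of_nonneg_left h1 (abs_nonneg _)
        _ = δ * (r ^ 2 * (1 - r) ^ 2 * |a'' c|) := by ring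
        _ ≤ δ * (16 * (c ^ 2 * (1 - c) ^ 2 * |a'' c|)) := by
            apply mul_le_mul_of_nonneg_left _ hδ0
            have := mul_le_mul_of_nonneg_right h16 (abs_nonneg (a'' c))
            nlinarith
        _ ≤ δ * (16 * N₂) := by
            apply mul_le_mul_of_nonneg_left _ hδ0
            linarith
        _ = 16 * N₂ * δ := by ring
    rcases lt_trichotomy r (S r) with hlt | heq | hgt
    · have hcont : ContinuousOn a' (Set.Icc r (S r)) := by
        intro x hx
        exact ((hda' x ⟨by linarith [hx.1], by linarith [hx.2]⟩).continuousAt).continuousWithinAt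
      have hderiv : ∀ x ∈ Set.Ioo r (S r), HasDerivAt a' (a'' x) x := by
        intro x hx
        exact hda' x ⟨by linarith [hx.1], by linarith [hx.2]⟩
      obtain ⟨c, hc, hceq⟩ := exists_hasDerivAt_eq_slope a' a'' hlt hcont hderiv
      refine main c ⟨by linarith [hc.1], by linarith [hc.2]⟩ (by linarith [hc.1])
        (by linarith [hc.2]) ?_
      rw [eq_div_iff (sub_ne_zero.mpr hlt.ne')] at hceq
      linarith [hceq]
    · rw [← heq]
      simp only [sub_self, abs_zero, mul_zero]
      positivity
    · have hcont : ContinuousOn a' (Set.Icc (S r) r) := by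
        intro x hx
        exact ((hda' x ⟨by linarith [hx.1], by linarith [hx.2]⟩).continuousAt).continuousWithinAt
      have hderiv : ∀ x ∈ Set.Ioo (S r) r, HasDerivAt a' (a'' x) x := by
        intro x hx
        exact hda' x ⟨by linarith [hx.1], by linarith [hx.2]⟩
      obtain ⟨c, hc, hceq⟩ := exists_hasDerivAt_eq_slope a' a'' hgt hcont hderiv
      refine main c ⟨by linarith [hc.1], by linarith [hc.2]⟩ (by linarith [hc.1])
        (by linarith [hc.2]) ?_
      rw [eq_div_iff (sub_ne_zero.mpr hgt.ne')] at hceq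
      linear_combination hceq
  -- combine
  have hS'b := hS'δ r ⟨hr0, hr1⟩
  have htri : |a' (S r) * S' r - a' r| ≤ |a' (S r)| * |S' r - 1| + |a' (S r) - a' r| := by
    calc |a' (S r) * S' r - a' r| = |a' (S r) * (S' r - 1) + (a' (S r) - a' r)| := by ring_nf
      _ ≤ |a' (S r) * (S' r - 1)| + |a' (S r) - a' r| := abs_add_le _ _
      _ = |a' (S r)| * |S' r - 1| + |a' (S r) - a' r| := by rw [abs_mul]
  have hstep : r * (1 - r) * |a' (S r) * S' r - a' r| ≤
      r * (1 - r) * |a' (S r)| * |S' r - 1| + r * (1 - r) * |a' (S r) - a' r| := by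
    have h := mul_le_mul_of_nonneg_left htri (by positivity : (0:ℝ) ≤ r * (1 - r))
    have hring : r * (1 - r) * (|a' (S r)| * |S' r - 1| + |a' (S r) - a' r|)
        = r * (1 - r) * |a' (S r)| * |S' r - 1| + r * (1 - r) * |a' (S r) - a' r| := by ring
    linarith
  have hfirst : r * (1 - r) * |a' (S r)| * |S' r - 1| ≤ 4 * N₁ * δ :=
    mul_le_mul hT1 hS'b (abs_nonneg _) (by linarith)
  have hlast : 4 * N₁ * δ + 16 * N₂ * δ ≤ 16 * (N₁ + N₂) * δ := by
    have h12 : 0 ≤ N₁ * δ := mul_nonneg hN1nn hδ0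
    have hring2 : 16 * (N₁ + N₂) * δ - (4 * N₁ * δ + 16 * N₂ * δ) = 12 * (N₁ * δ) := by ring
    linarith
  linarith
end

section
/- There is an absolute constant C > 0 such that the following holds: let δ ∈ [0,1/4], let S : [0,1] → [0,1] be a continuous, strictly increasing bijection, differentiable on (0,1), with |S(r) − r| ≤ δ·r(1−r) for all r ∈ [0,1] and |S'(r) − 1| ≤ δ for all r ∈ (0,1); let T = S^{-1}; let a ∈ C[0,1] be continuously differentiable on (0,1) with ‖a‖₁ := sup_{0<r<1} r(1−r)|a'(r)| < ∞. Define, for q ∈ C[0,1], L(q)(r) = r^{-3}∫₀^r a(ρ)q(ρ)ρ² dρ for 0 < r ≤ 1 (with L(q)(0) = a(0)q(0)/3), and L̃(q)(r̄) = S(r̄)^{-3}∫₀^{S(r̄)} a(ρ)q(T(ρ))ρ² dρ for 0 < r̄ ≤ 1 (with L̃(q)(0) = a(0)q(0)/3). Then for every q ∈ C[0,1], max_{0≤r̄≤1} |L̃(q)(r̄) − L(q)(r̄)| ≤ C·(‖a‖_∞ + ‖a‖₁)·δ·‖q‖_∞. -/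
/-!
Substituting `ρ = S x` turns `L̃(q)(r̄)` into `S(r̄)⁻³ ∫₀^r̄ a(S x) q(x) S(x)² S'(x) dx`, an
integral over the same interval as `L(q)(r̄)`. The two integrands then differ by at most
`20 (‖a‖_∞ + ‖a‖₁) δ ‖q‖_∞ x² / r̄³`: the factor `S'(x) (S(x)/x)² / (S(r̄)/r̄)³` is within
`20 δ` of `1`, and `|a(S x) - a(x)| ≤ 4/3 δ ‖a‖₁` by the mean value theorem, because the
weight `r (1 - r)` drops by at most a factor `3/4` between `x` and `S x`. Integrating
`x² / r̄³` over `[0, r̄]` gives `C = 20/3`.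
-/

open Set MeasureTheory intervalIntegral

lemma three_quarters_mul_one_sub_le {t c : ℝ} (ht : t ∈ Icc (0:ℝ) 1)
    (hc : |c - t| ≤ t * (1 - t) / 4) : 3 / 4 * (t * (1 - t)) ≤ c * (1 - c) := by
  obtain ⟨ht0, ht1⟩ := ht
  obtain ⟨hlo, hhi⟩ := abs_le.mp hc
  have hc0 : t * (3 + t) / 4 ≤ c := by linarith
  have hc1 : (1 - t) * (4 - t) / 4 ≤ 1 - c := by linarith
  nlinarith [mul_le_mul hc0 hc1 (by nlinarith) (by nlinarith),
    mul_nonneg (mul_nonneg ht0 (sub_nonneg.mpr ht1)) (mul_nonneg ht0 (sub_nonneg.mpr ht1))]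

lemma abs_sub_le_of_weighted_deriv_le {f f' : ℝ → ℝ} {N δ t s : ℝ}
    (hf : ∀ r ∈ Ioo (0:ℝ) 1, HasDerivAt f (f' r) r)
    (hN : ∀ r ∈ Ioo (0:ℝ) 1, r * (1 - r) * |f' r| ≤ N)
    (hδ : δ ≤ 1 / 4) (ht : t ∈ Ioo (0:ℝ) 1) (hst : |s - t| ≤ δ * (t * (1 - t))) :
    |f s - f t| ≤ 4 / 3 * δ * N := by
  have hw : 0 < t * (1 - t) := mul_pos ht.1 (by linarith [ht.2])
  have hN0 : 0 ≤ N := (mul_nonneg hw.le (abs_nonneg _)).trans (hN t ht)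
  have hnear : ∀ c ∈ uIcc t s, 3 / 4 * (t * (1 - t)) ≤ c * (1 - c) := fun c hc =>
    three_quarters_mul_one_sub_le (Ioo_subset_Icc_self ht) <|
      (abs_sub_left_of_mem_uIcc hc).trans (hst.trans (by nlinarith))
  have hmem : ∀ c ∈ uIcc t s, c ∈ Ioo (0:ℝ) 1 := fun c hc => by
    have := hnear c hc
    constructor <;> nlinarith
  have hderiv : ∀ c ∈ uIcc t s, ‖f' c‖ ≤ 4 / 3 * N / (t * (1 - t)) := by
    intro c hc
    rw [Real.norm_eq_abs, le_div_iff₀ hw]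
    nlinarith [hN c (hmem c hc), hnear c hc, abs_nonneg (f' c)]
  have hmvt := Convex.norm_image_sub_le_of_norm_hasDerivWithin_le
    (fun c hc => (hf c (hmem c hc)).hasDerivWithinAt) hderiv (convex_uIcc t s)
    left_mem_uIcc right_mem_uIcc
  rw [Real.norm_eq_abs, Real.norm_eq_abs] at hmvt
  calc |f s - f t| ≤ 4 / 3 * N / (t * (1 - t)) * |s - t| := hmvt
    _ ≤ 4 / 3 * N / (t * (1 - t)) * (δ * (t * (1 - t))) := by gcongr
    _ = 4 / 3 * δ * N := by field_simp [ht.1.ne', (sub_pos.2 ht.2).ne']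

lemma abs_mul_mul_sub_one_le {x y z δ : ℝ} (hδ : δ ≤ 1 / 4) (hx : |x - 1| ≤ δ)
    (hy : |y - 1| ≤ δ) (hz : |z - 1| ≤ δ) : |x * y * z - 1| ≤ 4 * δ := by
  have hδ0 : 0 ≤ δ := (abs_nonneg _).trans hx
  have hy' : |y| ≤ 5 / 4 := by rw [abs_le] at hy ⊢; constructor <;> linarith
  have hz' : |z| ≤ 5 / 4 := by rw [abs_le] at hz ⊢; constructor <;> linarith
  have hyz : |y * z| ≤ 25 / 16 := by
    rw [abs_mul]; nlinarith [abs_nonneg y, abs_nonneg z]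
  calc |x * y * z - 1| = |(x - 1) * (y * z) + (y - 1) * z + (z - 1)| := by ring_nf
    _ ≤ |x - 1| * |y * z| + |y - 1| * |z| + |z - 1| := by
      simpa only [abs_mul] using abs_add_three ((x - 1) * (y * z)) ((y - 1) * z) (z - 1)
    _ ≤ δ * (25 / 16) + δ * (5 / 4) + δ := by gcongr
    _ ≤ 4 * δ := by linarith

lemma abs_mul_sq_div_cube_sub_one_le {x y z δ : ℝ} (hδ : δ ≤ 1 / 4) (hx : |x - 1| ≤ δ)
    (hy : |y - 1| ≤ δ) (hz : |z - 1| ≤ δ) : |x * y ^ 2 / z ^ 3 - 1| ≤ 20 * δ := by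
  have hz0 : 3 / 4 ≤ z := by linarith [(abs_le.mp hz).1]
  have hz3 : 27 / 64 ≤ z ^ 3 := by nlinarith [pow_le_pow_left₀ (by norm_num) hz0 3]
  have hnum : |x * y ^ 2 - z ^ 3| ≤ 8 * δ := by
    have h1 := abs_mul_mul_sub_one_le hδ hx hy hy
    have h2 := abs_mul_mul_sub_one_le hδ hz hz hz
    calc |x * y ^ 2 - z ^ 3| = |(x * y * y - 1) - (z * z * z - 1)| := by ring_nf
      _ ≤ |x * y * y - 1| + |z * z * z - 1| := abs_sub (x * y * y - 1) (z * z * z - 1)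
      _ ≤ 8 * δ := by linarith
  have hz3pos : 0 < z ^ 3 := by linarith
  rw [div_sub_one hz3pos.ne', abs_div, abs_of_pos hz3pos, div_le_iff₀ hz3pos]
  nlinarith [(abs_nonneg _).trans hnum]

lemma abs_mul_sub_le_of_abs_sub_one_le {ρ u v δ Na N₁ : ℝ} (hδ : δ ≤ 1 / 4)
    (hρ : |ρ - 1| ≤ 20 * δ) (huv : |u - v| ≤ 4 / 3 * δ * N₁) (hv : |v| ≤ Na) :
    |ρ * u - v| ≤ 20 * δ * (Na + N₁) := by
  have hρ6 : |ρ| ≤ 6 := by rw [abs_le] at hρ ⊢; constructor <;> linarith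
  calc |ρ * u - v| = |ρ * (u - v) + (ρ - 1) * v| := by ring_nf
    _ ≤ |ρ| * |u - v| + |ρ - 1| * |v| := by
      simpa only [abs_mul] using abs_add_le (ρ * (u - v)) ((ρ - 1) * v)
    _ ≤ 6 * (4 / 3 * δ * N₁) + 20 * δ * Na := by
      gcongr
      exact (abs_nonneg _).trans hρ
    _ ≤ 20 * δ * (Na + N₁) := by nlinarith [(abs_nonneg _).trans huv, (abs_nonneg _).trans hρ]

lemma abs_div_sub_one_le_of_abs_sub_le {s r δ : ℝ} (hδ : 0 ≤ δ) (hr : r ∈ Ioc (0:ℝ) 1)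
    (h : |s - r| ≤ δ * (r * (1 - r))) : |s / r - 1| ≤ δ := by
  rw [div_sub_one hr.1.ne', abs_div, abs_of_pos hr.1, div_le_iff₀ hr.1]
  nlinarith [mul_nonneg hδ (mul_nonneg hr.1.le hr.1.le)]

lemma integral_comp_inv_eq_integral_mul_deriv {S S' T : ℝ → ℝ} {b : ℝ} (F : ℝ → ℝ → ℝ)
    (hb : 0 ≤ b) (hS : ContinuousOn S (Icc 0 b)) (hS' : ∀ x ∈ Ioo 0 b, HasDerivAt S (S' x) x)
    (hS'0 : ∀ x ∈ Ioo 0 b, 0 ≤ S' x) (hS0 : S 0 = 0) (hTS : ∀ x ∈ Icc 0 b, T (S x) = x) :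
    ∫ ρ in (0:ℝ)..(S b), F ρ (T ρ) = ∫ x in (0:ℝ)..b, F (S x) x * S' x := by
  have hchange := integral_comp_mul_deriv_of_deriv_nonneg (g := fun ρ => F ρ (T ρ))
    (by rwa [uIcc_of_le hb]) (by rwa [min_eq_left hb, max_eq_right hb])
    (by rwa [min_eq_left hb, max_eq_right hb])
  rw [hS0] at hchange
  rw [← hchange]
  refine integral_congr fun x hx => ?_
  rw [uIcc_of_le hb] at hx
  simp only [Function.comp_apply, hTS x hx]

lemma intervalIntegrable_mul_deriv_of_deriv_nonneg {S S' G : ℝ → ℝ} {b : ℝ} (hb : 0 ≤ b)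
    (hS : ContinuousOn S (Icc 0 b)) (hS' : ∀ x ∈ Ioo 0 b, HasDerivAt S (S' x) x)
    (hS'0 : ∀ x ∈ Ioo 0 b, 0 ≤ S' x) (hG : ContinuousOn G (Icc 0 b)) :
    IntervalIntegrable (fun x => G x * S' x) volume 0 b := by
  rw [← uIcc_of_le hb] at hG
  refine IntervalIntegrable.continuousOn_mul ?_ hG
  exact intervalIntegrable_deriv_of_nonneg (by rwa [uIcc_of_le hb])
    (by rwa [min_eq_left hb, max_eq_right hb]) (by rwa [min_eq_left hb, max_eq_right hb])

lemma abs_integral_le_of_abs_le_mul_sq {f : ℝ → ℝ} {b M : ℝ} (hb : 0 ≤ b)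
    (hf : IntervalIntegrable f volume 0 b) (h : ∀ x ∈ Ioo 0 b, |f x| ≤ M * x ^ 2) :
    |∫ x in (0:ℝ)..b, f x| ≤ M * b ^ 3 / 3 := by
  calc |∫ x in (0:ℝ)..b, f x| ≤ ∫ x in (0:ℝ)..b, |f x| := abs_integral_le_integral_abs hb
    _ ≤ ∫ x in (0:ℝ)..b, M * x ^ 2 :=
      integral_mono_on_of_le_Ioo hb hf.abs (Continuous.intervalIntegrable (by fun_prop) _ _) h
    _ = M * b ^ 3 / 3 := by
      rw [intervalIntegral.integral_const_mul, integral_pow]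
      ring

lemma abs_pullback_integrand_sub_le {S S' a a' q : ℝ → ℝ} {δ Na N₁ Nq t rb : ℝ}
    (hδ : δ ∈ Icc (0:ℝ) (1 / 4))
    (hS : ∀ r ∈ Icc (0:ℝ) 1, |S r - r| ≤ δ * (r * (1 - r)))
    (hS' : ∀ r ∈ Ioo (0:ℝ) 1, |S' r - 1| ≤ δ)
    (ha : ∀ r ∈ Ioo (0:ℝ) 1, HasDerivAt a (a' r) r)
    (hNa : ∀ r ∈ Icc (0:ℝ) 1, |a r| ≤ Na)
    (hN₁ : ∀ r ∈ Ioo (0:ℝ) 1, r * (1 - r) * |a' r| ≤ N₁)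
    (hNq : ∀ r ∈ Icc (0:ℝ) 1, |q r| ≤ Nq) (ht : t ∈ Ioo 0 rb) (hrb : rb ≤ 1) :
    |(S rb ^ 3)⁻¹ * (a (S t) * q t * S t ^ 2 * S' t) - (rb ^ 3)⁻¹ * (a t * q t * t ^ 2)| ≤
      20 * (Na + N₁) * δ * Nq * (t ^ 2 / rb ^ 3) := by
  have ht1 : t ∈ Ioo (0:ℝ) 1 := ⟨ht.1, ht.2.trans_le hrb⟩
  have hrb0 : 0 < rb := ht.1.trans ht.2
  have hrel : ∀ r ∈ Ioc (0:ℝ) 1, |S r / r - 1| ≤ δ := fun r hr =>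
    abs_div_sub_one_le_of_abs_sub_le hδ.1 hr (hS r (Ioc_subset_Icc_self hr))
  have hSrb : S rb ≠ 0 := by
    have := (abs_le.mp (hrel rb ⟨hrb0, hrb⟩)).1
    rintro h
    rw [h, zero_div] at this
    linarith [hδ.2]
  set ρ := S' t * (S t / t) ^ 2 / (S rb / rb) ^ 3
  have hρ : |ρ - 1| ≤ 20 * δ := abs_mul_sq_div_cube_sub_one_le hδ.2 (hS' t ht1)
    (hrel t (Ioo_subset_Ioc_self ht1)) (hrel rb ⟨hrb0, hrb⟩)
  have ha_near : |a (S t) - a t| ≤ 4 / 3 * δ * N₁ :=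
    abs_sub_le_of_weighted_deriv_le ha hN₁ hδ.2 ht1 (hS t (Ioo_subset_Icc_self ht1))
  have hsplit : (S rb ^ 3)⁻¹ * (a (S t) * q t * S t ^ 2 * S' t) - (rb ^ 3)⁻¹ * (a t * q t * t ^ 2) =
      t ^ 2 / rb ^ 3 * q t * (ρ * a (S t) - a t) := by
    simp only [ρ]; field_simp [ht.1.ne', hrb0.ne']
  have hq_t := hNq t (Ioo_subset_Icc_self ht1)
  have hweight : 0 ≤ t ^ 2 / rb ^ 3 := by positivity
  rw [hsplit, abs_mul, abs_mul, abs_of_nonneg hweight]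
  calc t ^ 2 / rb ^ 3 * |q t| * |ρ * a (S t) - a t|
      ≤ t ^ 2 / rb ^ 3 * Nq * (20 * δ * (Na + N₁)) :=
        mul_le_mul (mul_le_mul_of_nonneg_left hq_t hweight)
          (abs_mul_sub_le_of_abs_sub_one_le hδ.2 hρ ha_near (hNa t (Ioo_subset_Icc_self ht1)))
          (abs_nonneg _)
          (mul_nonneg hweight ((abs_nonneg _).trans hq_t))
    _ = 20 * (Na + N₁) * δ * Nq * (t ^ 2 / rb ^ 3) := by ring

theorem stmt_11 :
    ∃ C : ℝ, 0 < C ∧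
      ∀ δ : ℝ, δ ∈ Set.Icc (0:ℝ) (1/4) →
      ∀ S T S' : ℝ → ℝ,
        ContinuousOn S (Set.Icc 0 1) →
        StrictMonoOn S (Set.Icc 0 1) →
        (∀ r ∈ Set.Icc (0:ℝ) 1, S r ∈ Set.Icc (0:ℝ) 1) →
        S 0 = 0 → S 1 = 1 →
        (∀ r ∈ Set.Icc (0:ℝ) 1, T (S r) = r) →
        (∀ r ∈ Set.Icc (0:ℝ) 1, S (T r) = r) →
        (∀ r ∈ Set.Icc (0:ℝ) 1, T r ∈ Set.Icc (0:ℝ) 1) →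
        (∀ r ∈ Set.Ioo (0:ℝ) 1, HasDerivAt S (S' r) r) →
        (∀ r ∈ Set.Icc (0:ℝ) 1, |S r - r| ≤ δ * (r * (1 - r))) →
        (∀ r ∈ Set.Ioo (0:ℝ) 1, |S' r - 1| ≤ δ) →
      ∀ a a' : ℝ → ℝ,
        ContinuousOn a (Set.Icc 0 1) →
        (∀ r ∈ Set.Ioo (0:ℝ) 1, HasDerivAt a (a' r) r) →
        ContinuousOn a' (Set.Ioo 0 1) →
      ∀ Na N₁ : ℝ,
        (∀ r ∈ Set.Icc (0:ℝ) 1, |a r| ≤ Na) →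
        (∀ r ∈ Set.Ioo (0:ℝ) 1, r * (1 - r) * |a' r| ≤ N₁) →
      ∀ q : ℝ → ℝ, ContinuousOn q (Set.Icc 0 1) →
      ∀ Nq : ℝ, (∀ r ∈ Set.Icc (0:ℝ) 1, |q r| ≤ Nq) →
      ∀ rb ∈ Set.Ioc (0:ℝ) 1,
        |((S rb) ^ 3)⁻¹ * (∫ ρ in (0:ℝ)..(S rb), a ρ * q (T ρ) * ρ ^ 2) -
            (rb ^ 3)⁻¹ * (∫ ρ in (0:ℝ)..rb, a ρ * q ρ * ρ ^ 2)| ≤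
          C * (Na + N₁) * δ * Nq := by
  refine ⟨20 / 3, by norm_num, ?_⟩
  rintro δ hδ S T S' hS_cont - hS_maps hS0 - hTS - - hS_deriv hS_near hS'_near a a' ha_cont
    ha_deriv - Na N₁ hNa hN₁ q hq_cont Nq hNq rb ⟨hrb0, hrb1⟩
  have hIcc : Icc 0 rb ⊆ Icc (0:ℝ) 1 := Icc_subset_Icc_right hrb1
  have hIoo : Ioo 0 rb ⊆ Ioo (0:ℝ) 1 := Ioo_subset_Ioo_right hrb1
  have hS_deriv' : ∀ x ∈ Ioo 0 rb, HasDerivAt S (S' x) x := fun x hx => hS_deriv x (hIoo hx)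
  have hS'_nonneg : ∀ x ∈ Ioo 0 rb, 0 ≤ S' x := fun x hx => by
    linarith [(abs_le.mp (hS'_near x (hIoo hx))).1, hδ.2]
  have hchange : ∫ ρ in (0:ℝ)..(S rb), a ρ * q (T ρ) * ρ ^ 2 =
      ∫ x in (0:ℝ)..rb, a (S x) * q x * S x ^ 2 * S' x :=
    integral_comp_inv_eq_integral_mul_deriv (fun ρ x => a ρ * q x * ρ ^ 2) hrb0.le
      (hS_cont.mono hIcc) hS_deriv' hS'_nonneg hS0 fun x hx => hTS x (hIcc hx)
  have hF : IntervalIntegrable (fun x => a (S x) * q x * S x ^ 2 * S' x) volume 0 rb :=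
    intervalIntegrable_mul_deriv_of_deriv_nonneg hrb0.le (hS_cont.mono hIcc) hS_deriv'
      hS'_nonneg <| ((ha_cont.comp (hS_cont.mono hIcc) fun x hx => hS_maps x (hIcc hx)).mul
        (hq_cont.mono hIcc)).mul ((hS_cont.mono hIcc).pow 2)
  have hG : IntervalIntegrable (fun x => a x * q x * x ^ 2) volume 0 rb :=
    ((ha_cont.mul hq_cont).mul (continuousOn_pow 2)).mono hIcc |>.intervalIntegrable_of_Icc hrb0.le
  rw [hchange, ← intervalIntegral.integral_const_mul, ← intervalIntegral.integral_const_mul,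
    ← integral_sub (hF.const_mul _) (hG.const_mul _)]
  calc _ ≤ 20 * (Na + N₁) * δ * Nq / rb ^ 3 * rb ^ 3 / 3 :=
        abs_integral_le_of_abs_le_mul_sq hrb0.le ((hF.const_mul _).sub (hG.const_mul _))
          fun x hx => (abs_pullback_integrand_sub_le hδ hS_near hS'_near ha_deriv hNa hN₁ hNq
            hx hrb1).trans_eq (by ring)
    _ = 20 / 3 * (Na + N₁) * δ * Nq := by
      field_simp
end

section
/- Let λ ∈ ℂ with Re λ > 0, let f : [0,1] → ℂ be continuous, and fix r₀ ∈ (0,1). Define, for 0 < r < 1, q(r) = e^{−λ∫_{r₀}^r dρ/w(ρ)} · ∫_r^1 (f(η)/w(η)) · e^{λ∫_{r₀}^η dρ/w(ρ)} dη. Then q extends to a continuous function on [0,1], q is continuously differentiable on (0,1) and satisfies −w(r)q'(r) − λ·q(r) = f(r) for all r ∈ (0,1), and sup_{0≤r≤1}|q(r)| ≤ ‖f‖_∞ / Re λ. -/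
open Set Filter Topology MeasureTheory intervalIntegral
open scoped Real Complex Interval

/-!
Write `Φ r = ∫_{r₀}^r dρ / w ρ`, so that `Φ' = 1 / w < 0` and `q = e^{-λΦ} ∫_r^1 f Φ' e^{λΦ}`.
The lower bound `-w ≤ C₁ r (1 - r)` makes `Φ + (log r - log (1 - r)) / C₁` antitone, hence
`Φ → +∞` at `0` and `Φ → -∞` at `1`. The integrand is dominated by `‖f‖ (-Φ') e^{Re λ Φ}`, whose
primitive `-e^{Re λ Φ} / Re λ` tends to `0` at `1`; so the integral converges and
`‖q‖ ≤ ‖f‖ / Re λ`, and differentiating gives `-w q' - λ q = f`. For constant `f = c` one gets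
exactly `q = -c / λ`, so near an endpoint `e` the difference `q + f e / λ` is the `q` of `f - f e`,
which is small: near `1` by the bound, near `0` after splitting the integral at some `s` close to
`0`, the part beyond `s` being damped by `e^{-Re λ (Φ r - Φ s)} → 0`.
-/

section SingularEndpoint

variable {E : Type*} [NormedAddCommGroup E] [NormedSpace ℝ E] {F F' : ℝ → E} {a b : ℝ} {l : E}

lemma hasDerivAt_extendFrom_Ioo (hF : ∀ x ∈ Ioo a b, HasDerivAt F (F' x) x) {x : ℝ}
    (hx : x ∈ Ioo a b) : HasDerivAt (extendFrom (Ioo a b) F) (F' x) x :=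
  (hF x hx).congr_of_eventuallyEq <| eventually_of_mem (isOpen_Ioo.mem_nhds hx)
    (extendFrom_extends fun y hy => (hF y hy).continuousAt.continuousWithinAt)

lemma continuousOn_extendFrom_Ioo_of_hasDerivAt (hab : a < b)
    (hF : ∀ x ∈ Ico a b, HasDerivAt F (F' x) x) (hb : Tendsto F (𝓝[<] b) (𝓝 l)) :
    ContinuousOn (extendFrom (Ioo a b) F) (Icc a b) :=
  continuousOn_Icc_extendFrom_Ioo
    (fun x hx => (hF x (Ioo_subset_Ico_self hx)).continuousAt.continuousWithinAt)
    ((hF a ⟨le_rfl, hab⟩).continuousAt.tendsto.mono_left nhdsWithin_le_nhds) hb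

theorem integral_eq_of_hasDerivAt_of_tendsto [CompleteSpace E] (hab : a < b)
    (hF : ∀ x ∈ Ico a b, HasDerivAt F (F' x) x) (hb : Tendsto F (𝓝[<] b) (𝓝 l))
    (hint : IntervalIntegrable F' volume a b) : ∫ x in a..b, F' x = l - F a := by
  have ha : Tendsto F (𝓝[>] a) (𝓝 (F a)) :=
    (hF a ⟨le_rfl, hab⟩).continuousAt.tendsto.mono_left nhdsWithin_le_nhds
  rw [integral_eq_sub_of_hasDeriv_right_of_le hab.le
    (continuousOn_extendFrom_Ioo_of_hasDerivAt hab hF hb)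
    (fun x hx => (hasDerivAt_extendFrom_Ioo (fun y hy => hF y (Ioo_subset_Ico_self hy)) hx
      ).hasDerivWithinAt) hint,
    eq_lim_at_right_extendFrom_Ioo hab hb, eq_lim_at_left_extendFrom_Ioo hab ha]

theorem intervalIntegrable_deriv_of_nonneg_of_tendsto {G g : ℝ → ℝ} {l : ℝ} (hab : a < b)
    (hG : ∀ x ∈ Ico a b, HasDerivAt G (g x) x) (hg : ∀ x ∈ Ioo a b, 0 ≤ g x)
    (hb : Tendsto G (𝓝[<] b) (𝓝 l)) : IntervalIntegrable g volume a b := by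
  have hIoo : Ioo (min a b) (max a b) = Ioo a b := by rw [min_eq_left hab.le, max_eq_right hab.le]
  refine intervalIntegrable_deriv_of_nonneg (g := extendFrom (Ioo a b) G)
    (by simpa only [uIcc_of_le hab.le] using continuousOn_extendFrom_Ioo_of_hasDerivAt hab hG hb)
    (fun x hx => ?_) (fun x hx => hg x (hIoo ▸ hx))
  exact hasDerivAt_extendFrom_Ioo (fun y hy => hG y (Ioo_subset_Ico_self hy)) (hIoo ▸ hx)

end SingularEndpoint

/-- The properties of `Φ = ∫_{r₀}^· 1 / w` and `φ = 1 / w` on `(a, b) = (0, 1)` that the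
argument uses. -/
structure IsDecreasingPotential (Φ φ : ℝ → ℝ) (a b : ℝ) : Prop where
  hasDerivAt : ∀ x ∈ Ioo a b, HasDerivAt Φ (φ x) x
  continuousOn : ContinuousOn φ (Ioo a b)
  deriv_neg : ∀ x ∈ Ioo a b, φ x < 0
  tendsto_atBot : Tendsto Φ (𝓝[<] b) atBot

noncomputable def tailSolution (Φ φ : ℝ → ℝ) (b : ℝ) (lam : ℂ) (f : ℝ → ℂ) (r : ℝ) : ℂ :=
  cexp (-lam * Φ r) * ∫ η in r..b, f η * φ η * cexp (lam * Φ η)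

lemma norm_cexp_mul_ofReal (z : ℂ) (t : ℝ) : ‖cexp (z * t)‖ = rexp (z.re * t) := by
  rw [Complex.norm_exp, Complex.re_mul_ofReal]

namespace IsDecreasingPotential

variable {Φ φ : ℝ → ℝ} {a b : ℝ} {lam : ℂ} {f : ℝ → ℂ} {r s M : ℝ}

lemma continuousOn_potential (hP : IsDecreasingPotential Φ φ a b) : ContinuousOn Φ (Ioo a b) :=
  fun x hx => (hP.hasDerivAt x hx).continuousAt.continuousWithinAt

lemma hasDerivAt_cexp (hP : IsDecreasingPotential Φ φ a b) (z : ℂ) {x : ℝ} (hx : x ∈ Ioo a b) :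
    HasDerivAt (fun y => cexp (z * Φ y)) (z * φ x * cexp (z * Φ x)) x := by
  convert ((hP.hasDerivAt x hx).ofReal_comp.const_mul z).cexp using 1
  ring

lemma tendsto_cexp (hP : IsDecreasingPotential Φ φ a b) {z : ℂ} (hz : 0 < z.re) :
    Tendsto (fun y => cexp (z * Φ y)) (𝓝[<] b) (𝓝 0) := by
  rw [tendsto_zero_iff_norm_tendsto_zero]
  simp_rw [norm_cexp_mul_ofReal]
  exact Real.tendsto_exp_atBot.comp (hP.tendsto_atBot.const_mul_atBot hz)

lemma hasDerivAt_weight_primitive (hP : IsDecreasingPotential Φ φ a b) {c : ℝ} (hc : c ≠ 0)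
    {x : ℝ} (hx : x ∈ Ioo a b) :
    HasDerivAt (fun y => -(rexp (c * Φ y) / c)) (-φ x * rexp (c * Φ x)) x :=
  (((hP.hasDerivAt x hx).const_mul c).exp.div_const c).neg.congr_deriv (by field_simp)

lemma tendsto_weight_primitive (hP : IsDecreasingPotential Φ φ a b) {c : ℝ} (hc : 0 < c) :
    Tendsto (fun y => -(rexp (c * Φ y) / c)) (𝓝[<] b) (𝓝 0) := by
  simpa using ((Real.tendsto_exp_atBot.comp (hP.tendsto_atBot.const_mul_atBot hc)).div_const c).neg

lemma intervalIntegrable_weight (hP : IsDecreasingPotential Φ φ a b) {c : ℝ} (hc : 0 < c)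
    (hr : r ∈ Ioo a b) : IntervalIntegrable (fun y => -φ y * rexp (c * Φ y)) volume r b := by
  refine intervalIntegrable_deriv_of_nonneg_of_tendsto hr.2
    (fun x hx => hP.hasDerivAt_weight_primitive hc.ne' ⟨hr.1.trans_le hx.1, hx.2⟩)
    (fun x hx => mul_nonneg (neg_nonneg.2 (hP.deriv_neg x ⟨hr.1.trans hx.1, hx.2⟩).le)
      (Real.exp_pos _).le) (hP.tendsto_weight_primitive hc)

lemma integral_weight (hP : IsDecreasingPotential Φ φ a b) {c : ℝ} (hc : 0 < c)
    (hr : r ∈ Ioo a b) : ∫ y in r..b, -φ y * rexp (c * Φ y) = rexp (c * Φ r) / c := by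
  rw [integral_eq_of_hasDerivAt_of_tendsto hr.2
    (fun x hx => hP.hasDerivAt_weight_primitive hc.ne' ⟨hr.1.trans_le hx.1, hx.2⟩)
    (hP.tendsto_weight_primitive hc)
    (hP.intervalIntegrable_weight hc hr)]
  ring

lemma norm_integrand_le (hP : IsDecreasingPotential Φ φ a b) {η : ℝ} (hη : η ∈ Ioo a b)
    (hM : ‖f η‖ ≤ M) :
    ‖f η * φ η * cexp (lam * Φ η)‖ ≤ M * (-φ η * rexp (lam.re * Φ η)) := by
  rw [norm_mul, norm_mul, norm_cexp_mul_ofReal, Complex.norm_real,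
    Real.norm_of_nonpos (hP.deriv_neg η hη).le, mul_assoc]
  exact mul_le_mul_of_nonneg_right hM
    (mul_nonneg (neg_nonneg.2 (hP.deriv_neg η hη).le) (Real.exp_pos _).le)

lemma continuousOn_integrand (hP : IsDecreasingPotential Φ φ a b) {U : Set ℝ}
    (hU : U ⊆ Ioo a b) (hf : ContinuousOn f U) :
    ContinuousOn (fun η => f η * φ η * cexp (lam * Φ η)) U := by
  have := hP.continuousOn.mono hU
  have := hP.continuousOn_potential.mono hU
  fun_prop

lemma intervalIntegrable_integrand (hP : IsDecreasingPotential Φ φ a b) (hlam : 0 < lam.re)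
    (hr : a < r) (hrs : r ≤ s) (hs : s ≤ b) (hf : ContinuousOn f (Icc r s)) :
    IntervalIntegrable (fun η => f η * φ η * cexp (lam * Φ η)) volume r s := by
  rcases hrs.eq_or_lt with rfl | hrs'
  · exact IntervalIntegrable.refl
  obtain ⟨M, hM⟩ := isCompact_Icc.exists_bound_of_continuousOn hf
  have hsub : Ioo r s ⊆ Ioo a b := Ioo_subset_Ioo hr.le hs
  have hIoo : volume.restrict (Ι r s) = volume.restrict (Ioo r s) := by
    rw [uIoc_of_le hrs]; exact (Measure.restrict_congr_set Ioo_ae_eq_Ioc).symm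
  refine (((hP.intervalIntegrable_weight hlam ⟨hr, hrs'.trans_le hs⟩).mono_set
    (uIcc_subset_uIcc_left (Icc_subset_uIcc ⟨hrs, hs⟩))).const_mul M).mono_fun' ?_ ?_
  · rw [hIoo]
    exact (hP.continuousOn_integrand hsub (hf.mono Ioo_subset_Icc_self)).aestronglyMeasurable
      measurableSet_Ioo
  · rw [hIoo]
    filter_upwards [ae_restrict_mem measurableSet_Ioo] with η hη
    exact hP.norm_integrand_le (hsub hη) (hM η (Ioo_subset_Icc_self hη))

lemma norm_cexp_mul_integral_le (hP : IsDecreasingPotential Φ φ a b) (hlam : 0 < lam.re)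
    (hr : a < r) (hrs : r ≤ s) (hs : s ≤ b) (hM : ∀ η ∈ Icc r s, ‖f η‖ ≤ M) :
    ‖cexp (-lam * Φ r) * ∫ η in r..s, f η * φ η * cexp (lam * Φ η)‖ ≤ M / lam.re := by
  have hM0 : 0 ≤ M := (norm_nonneg _).trans (hM r ⟨le_rfl, hrs⟩)
  rcases (hrs.trans hs).lt_or_eq with hrb | rfl
  swap
  · rw [le_antisymm hs hrs, integral_same, mul_zero, norm_zero]
    exact div_nonneg hM0 hlam.le
  have hweight := (hP.intervalIntegrable_weight hlam ⟨hr, hrb⟩).const_mul M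
  have hle : ‖∫ η in r..s, f η * φ η * cexp (lam * Φ η)‖
      ≤ ∫ η in r..s, M * (-φ η * rexp (lam.re * Φ η)) := by
    refine norm_integral_le_of_norm_le hrs ?_
      (hweight.mono_set (uIcc_subset_uIcc_left (Icc_subset_uIcc ⟨hrs, hs⟩)))
    filter_upwards [Measure.ae_ne volume s] with η hηs hη
    exact hP.norm_integrand_le ⟨hr.trans hη.1, (lt_of_le_of_ne hη.2 hηs).trans_le hs⟩
      (hM η (Ioc_subset_Icc_self hη))
  have hmono : ∫ η in r..s, M * (-φ η * rexp (lam.re * Φ η))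
      ≤ M * (rexp (lam.re * Φ r) / lam.re) := by
    rw [← hP.integral_weight hlam ⟨hr, hrb⟩, ← intervalIntegral.integral_const_mul]
    refine integral_mono_interval le_rfl hrs hs ?_ hweight
    filter_upwards [ae_restrict_of_ae (Measure.ae_ne volume b), ae_restrict_mem measurableSet_Ioc]
      with η hηb hη
    exact mul_nonneg hM0 (mul_nonneg (neg_nonneg.2 (hP.deriv_neg η
      ⟨hr.trans hη.1, lt_of_le_of_ne hη.2 hηb⟩).le) (Real.exp_pos _).le)
  rw [norm_mul, norm_cexp_mul_ofReal, Complex.neg_re, neg_mul, Real.exp_neg]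
  calc (rexp (lam.re * Φ r))⁻¹ * ‖∫ η in r..s, f η * φ η * cexp (lam * Φ η)‖
      ≤ (rexp (lam.re * Φ r))⁻¹ * (M * (rexp (lam.re * Φ r) / lam.re)) := by
        gcongr; exact hle.trans hmono
    _ = M / lam.re := by field_simp

lemma tailSolution_const (hP : IsDecreasingPotential Φ φ a b) (hlam : 0 < lam.re)
    (hr : r ∈ Ioo a b) (z : ℂ) : tailSolution Φ φ b lam (fun _ => z) r = -z / lam := by
  have hlam0 : lam ≠ 0 := fun h => by simp [h] at hlam
  have hF : ∀ x ∈ Ico r b, HasDerivAt (fun y => z / lam * cexp (lam * Φ y))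
      (z * φ x * cexp (lam * Φ x)) x := fun x hx =>
    ((hP.hasDerivAt_cexp lam ⟨hr.1.trans_le hx.1, hx.2⟩).const_mul (z / lam)).congr_deriv
      (by field_simp)
  rw [tailSolution, integral_eq_of_hasDerivAt_of_tendsto hr.2 hF
    (by simpa using (hP.tendsto_cexp hlam).const_mul (z / lam))
    (hP.intervalIntegrable_integrand hlam hr.1 hr.2.le le_rfl continuousOn_const)]
  have hexp : cexp (-lam * Φ r) * cexp (lam * Φ r) = 1 := by
    rw [← Complex.exp_add]; simp
  linear_combination (-z / lam) * hexp

lemma tailSolution_sub_const (hP : IsDecreasingPotential Φ φ a b) (hlam : 0 < lam.re)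
    (hr : r ∈ Ioo a b) (hf : ContinuousOn f (Icc r b)) (z : ℂ) :
    tailSolution Φ φ b lam (fun η => f η - z) r = tailSolution Φ φ b lam f r + z / lam := by
  have hconst := hP.tailSolution_const hlam hr z
  simp only [tailSolution] at hconst ⊢
  simp_rw [sub_mul]
  rw [integral_sub (hP.intervalIntegrable_integrand hlam hr.1 hr.2.le le_rfl hf)
    (hP.intervalIntegrable_integrand hlam hr.1 hr.2.le le_rfl continuousOn_const), mul_sub, hconst]
  ring

lemma tailSolution_eq_add (hP : IsDecreasingPotential Φ φ a b) (hlam : 0 < lam.re)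
    (hr : a < r) (hrs : r ≤ s) (hs : s ≤ b) (hf : ContinuousOn f (Icc r b)) :
    tailSolution Φ φ b lam f r = cexp (-lam * Φ r) * (∫ η in r..s, f η * φ η * cexp (lam * Φ η))
      + cexp (-lam * ((Φ r - Φ s : ℝ) : ℂ)) * tailSolution Φ φ b lam f s := by
  rw [tailSolution, tailSolution, ← integral_add_adjacent_intervals
    (hP.intervalIntegrable_integrand hlam hr hrs hs (hf.mono (Icc_subset_Icc_right hs)))
    (hP.intervalIntegrable_integrand hlam (hr.trans_le hrs) hs le_rfl
      (hf.mono (Icc_subset_Icc_left hrs))), ← mul_assoc, ← Complex.exp_add]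
  push_cast
  ring_nf

lemma norm_tailSolution_le (hP : IsDecreasingPotential Φ φ a b) (hlam : 0 < lam.re)
    (hr : r ∈ Ioo a b) (hM : ∀ η ∈ Icc r b, ‖f η‖ ≤ M) :
    ‖tailSolution Φ φ b lam f r‖ ≤ M / lam.re :=
  hP.norm_cexp_mul_integral_le hlam hr.1 hr.2.le le_rfl hM

lemma hasDerivAt_tailSolution (hP : IsDecreasingPotential Φ φ a b) (hlam : 0 < lam.re)
    (hf : ContinuousOn f (Ioc a b)) (hr : r ∈ Ioo a b) :
    HasDerivAt (tailSolution Φ φ b lam f) (-φ r * (lam * tailSolution Φ φ b lam f r + f r)) r := by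
  have hg := hP.continuousOn_integrand (lam := lam) subset_rfl (hf.mono Ioo_subset_Ioc_self)
  have hI := integral_hasDerivAt_left
    (hP.intervalIntegrable_integrand hlam hr.1 hr.2.le le_rfl
      (hf.mono (Icc_subset_Ioc_iff hr.2.le |>.2 ⟨hr.1, le_rfl⟩)))
    (hg.stronglyMeasurableAtFilter isOpen_Ioo r hr) (hg.continuousAt (isOpen_Ioo.mem_nhds hr))
  refine ((hP.hasDerivAt_cexp (-lam) hr).mul hI).congr_deriv ?_
  rw [tailSolution]
  have hexp : cexp (-lam * Φ r) * cexp (lam * Φ r) = 1 := by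
    rw [← Complex.exp_add]; simp
  linear_combination (-(f r) * φ r) * hexp

lemma continuousOn_tailSolution (hP : IsDecreasingPotential Φ φ a b) (hlam : 0 < lam.re)
    (hf : ContinuousOn f (Ioc a b)) : ContinuousOn (tailSolution Φ φ b lam f) (Ioo a b) :=
  fun _ hr => (hP.hasDerivAt_tailSolution hlam hf hr).continuousAt.continuousWithinAt

lemma tendsto_tailSolution_of_sub_const (hP : IsDecreasingPotential Φ φ a b)
    (hlam : 0 < lam.re) {l : Filter ℝ} (hl : Ioo a b ∈ l) (hf : ContinuousOn f (Ioc a b))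
    {z : ℂ} (h : Tendsto (tailSolution Φ φ b lam (fun η => f η - z)) l (𝓝 0)) :
    Tendsto (tailSolution Φ φ b lam f) l (𝓝 (-z / lam)) := by
  rw [neg_div, ← zero_sub]
  refine (h.sub_const (z / lam)).congr' ?_
  filter_upwards [hl] with r hr
  rw [hP.tailSolution_sub_const hlam hr (hf.mono (Icc_subset_Ioc_iff hr.2.le |>.2 ⟨hr.1, le_rfl⟩))]
  ring

lemma tendsto_tailSolution_right (hP : IsDecreasingPotential Φ φ a b) (hlam : 0 < lam.re)
    (hab : a < b) (hf : ContinuousOn f (Ioc a b)) :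
    Tendsto (tailSolution Φ φ b lam f) (𝓝[<] b) (𝓝 (-f b / lam)) := by
  have hzero : Tendsto (tailSolution Φ φ b lam (fun η => f η - f b)) (𝓝[<] b) (𝓝 0) := by
    refine Metric.tendsto_nhds.2 fun ε hε => ?_
    obtain ⟨δ, hδ, hfδ⟩ := Metric.continuousWithinAt_iff.1 (hf b ⟨hab, le_rfl⟩)
      (ε * lam.re / 2) (by positivity)
    filter_upwards [Ioo_mem_nhdsLT (max_lt hab (sub_lt_self b hδ))] with r hr
    have hr' : r ∈ Ioo a b := ⟨(le_max_left _ _).trans_lt hr.1, hr.2⟩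
    rw [dist_zero_right]
    refine (hP.norm_tailSolution_le hlam hr' (M := ε * lam.re / 2) fun η hη => ?_).trans_lt ?_
    · rw [← dist_eq_norm]
      refine (hfδ ⟨hr'.1.trans_le hη.1, hη.2⟩ ?_).le
      rw [Real.dist_eq, abs_sub_lt_iff]
      constructor <;> linarith [le_max_right a (b - δ), hr.1, hη.1, hη.2]
    · rw [div_lt_iff₀ hlam]; linarith [mul_pos hε hlam]
  exact hP.tendsto_tailSolution_of_sub_const hlam (Ioo_mem_nhdsLT hab) hf hzero

lemma tendsto_tailSolution_left (hP : IsDecreasingPotential Φ φ a b) (hlam : 0 < lam.re)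
    (hab : a < b) (hΦ : Tendsto Φ (𝓝[>] a) atTop) (hf : ContinuousOn f (Icc a b)) :
    Tendsto (tailSolution Φ φ b lam f) (𝓝[>] a) (𝓝 (-f a / lam)) := by
  set h : ℝ → ℂ := fun η => f η - f a
  have hzero : Tendsto (tailSolution Φ φ b lam h) (𝓝[>] a) (𝓝 0) := by
    refine Metric.tendsto_nhds.2 fun ε hε => ?_
    obtain ⟨δ, hδ, hfδ⟩ := Metric.continuousWithinAt_iff.1 (hf a ⟨le_rfl, hab.le⟩)
      (ε * lam.re / 2) (by positivity)
    obtain ⟨s, has, hs⟩ := exists_between (lt_min (lt_add_of_pos_right a hδ) hab)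
    obtain ⟨hsδ, hsb⟩ := lt_min_iff.1 hs
    have hdecay : Tendsto (fun r => rexp (-lam.re * (Φ r - Φ s)) * ‖tailSolution Φ φ b lam h s‖)
        (𝓝[>] a) (𝓝 0) := by
      have := (tendsto_atTop_add_const_right _ (-Φ s) hΦ).const_mul_atTop_of_neg
        (neg_lt_zero.2 hlam)
      simpa [sub_eq_add_neg] using (Real.tendsto_exp_atBot.comp this).mul_const _
    filter_upwards [Ioo_mem_nhdsGT has, hdecay.eventually_lt_const (half_pos hε)]
      with r hr hsmall
    have hhead := hP.norm_cexp_mul_integral_le hlam hr.1 hr.2.le hsb.le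
      (M := ε * lam.re / 2) (f := h) fun η hη => by
        refine (dist_eq_norm (f η) (f a) ▸ hfδ ⟨hr.1.le.trans hη.1, hη.2.trans hsb.le⟩ ?_).le
        rw [Real.dist_eq, abs_sub_lt_iff]
        constructor <;> linarith [hr.1, hη.1, hη.2]
    rw [dist_zero_right, hP.tailSolution_eq_add hlam hr.1 hr.2.le hsb.le (f := h)
      ((hf.sub continuousOn_const).mono (Icc_subset_Icc_left hr.1.le))]
    calc _ ≤ _ := norm_add_le _ _
      _ < ε / 2 + ε / 2 := by
        refine add_lt_add_of_le_of_lt (hhead.trans_eq (by field_simp)) ?_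
        rwa [norm_mul, norm_cexp_mul_ofReal, Complex.neg_re]
      _ = ε := add_halves ε
  exact hP.tendsto_tailSolution_of_sub_const hlam (Ioo_mem_nhdsGT hab)
    (hf.mono Ioc_subset_Icc_self) hzero

lemma continuousOn_extendFrom_tailSolution (hP : IsDecreasingPotential Φ φ a b)
    (hlam : 0 < lam.re) (hab : a < b) (hΦ : Tendsto Φ (𝓝[>] a) atTop)
    (hf : ContinuousOn f (Icc a b)) :
    ContinuousOn (extendFrom (Ioo a b) (tailSolution Φ φ b lam f)) (Icc a b) :=
  continuousOn_Icc_extendFrom_Ioo (hP.continuousOn_tailSolution hlam (hf.mono Ioc_subset_Icc_self))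
    (hP.tendsto_tailSolution_left hlam hab hΦ hf)
    (hP.tendsto_tailSolution_right hlam hab (hf.mono Ioc_subset_Icc_self))

lemma norm_extendFrom_tailSolution_le (hP : IsDecreasingPotential Φ φ a b)
    (hlam : 0 < lam.re) (hab : a < b) (hΦ : Tendsto Φ (𝓝[>] a) atTop)
    (hf : ContinuousOn f (Icc a b)) (hM : ∀ η ∈ Icc a b, ‖f η‖ ≤ M) (hr : r ∈ Icc a b) :
    ‖extendFrom (Ioo a b) (tailSolution Φ φ b lam f) r‖ ≤ M / lam.re := by
  have hQ := hP.continuousOn_extendFrom_tailSolution hlam hab hΦ hf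
  refine ContinuousWithinAt.closure_le (closure_Ioo hab.ne ▸ hr)
    ((hQ r hr).norm.mono Ioo_subset_Icc_self) continuousWithinAt_const fun x hx => ?_
  rw [extendFrom_extends (hP.continuousOn_tailSolution hlam (hf.mono Ioc_subset_Icc_self)) x hx]
  exact hP.norm_tailSolution_le hlam hx fun η hη => hM η ⟨hx.1.le.trans hη.1, hη.2⟩

end IsDecreasingPotential

section InverseIntegral

variable {w : ℝ → ℝ} {a b r₀ C : ℝ}

lemma hasDerivAt_integral_of_continuousOn {g : ℝ → ℝ} (hg : ContinuousOn g (Ioo a b))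
    (hr₀ : r₀ ∈ Ioo a b) {x : ℝ} (hx : x ∈ Ioo a b) :
    HasDerivAt (fun r => ∫ ρ in r₀..r, g ρ) (g x) x :=
  integral_hasDerivAt_right ((hg.mono (ordConnected_Ioo.uIcc_subset hr₀ hx)).intervalIntegrable)
    (hg.stronglyMeasurableAtFilter isOpen_Ioo x hx) (hg.continuousAt (isOpen_Ioo.mem_nhds hx))

lemma antitoneOn_integral_inv_add_logit (hw : ContinuousOn w (Ioo 0 1))
    (hw_neg : ∀ r ∈ Ioo (0 : ℝ) 1, w r < 0) (hC : 0 < C)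
    (hw_lb : ∀ r ∈ Ioo (0 : ℝ) 1, -C * (r * (1 - r)) ≤ w r) (hr₀ : r₀ ∈ Ioo (0 : ℝ) 1) :
    AntitoneOn (fun r => (∫ ρ in r₀..r, 1 / w ρ) + (Real.log r - Real.log (1 - r)) / C)
      (Ioo 0 1) := by
  have hd : ∀ x ∈ Ioo (0 : ℝ) 1, HasDerivAt
      (fun r => (∫ ρ in r₀..r, 1 / w ρ) + (Real.log r - Real.log (1 - r)) / C)
      (1 / w x + 1 / (C * (x * (1 - x)))) x := by
    intro x hx
    have hx0 : x ≠ 0 := hx.1.ne'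
    have h1x : 1 - x ≠ 0 := (sub_pos.2 hx.2).ne'
    refine ((hasDerivAt_integral_of_continuousOn (g := fun ρ => 1 / w ρ)
      (continuousOn_const.div hw fun r hr => (hw_neg r hr).ne) hr₀ hx).add
      (((Real.hasDerivAt_log hx.1.ne').sub
        (((hasDerivAt_id' x).const_sub 1).log h1x)).div_const C)).congr_deriv ?_
    field_simp
    ring
  refine antitoneOn_of_hasDerivWithinAt_nonpos (convex_Ioo 0 1)
    (f' := fun x => 1 / w x + 1 / (C * (x * (1 - x))))
    (fun x hx => (hd x hx).continuousAt.continuousWithinAt) (fun x hx => ?_) (fun x hx => ?_)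
  · rw [interior_Ioo] at hx ⊢
    exact (hd x hx).hasDerivWithinAt
  · rw [interior_Ioo] at hx
    have hp : 0 < x * (1 - x) := mul_pos hx.1 (sub_pos.2 hx.2)
    have := one_div_le_one_div_of_neg_of_le (hw_neg x hx) (hw_lb x hx)
    rw [neg_mul, one_div_neg_eq_neg_one_div] at this
    linarith

lemma tendsto_nhdsGT_zero_of_antitoneOn_add_logit {Φ : ℝ → ℝ} (hC : 0 < C)
    (hr₀ : r₀ ∈ Ioo (0 : ℝ) 1)
    (hΦ : AntitoneOn (fun r => Φ r + (Real.log r - Real.log (1 - r)) / C) (Ioo 0 1)) :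
    Tendsto Φ (𝓝[>] 0) atTop := by
  have hlog : Tendsto (fun r => Real.log (1 - r)) (𝓝[>] 0) (𝓝 0) := by
    have : ContinuousAt (fun r : ℝ => Real.log (1 - r)) 0 := by fun_prop (disch := norm_num)
    simpa using this.tendsto.mono_left nhdsWithin_le_nhds
  have hL : Tendsto (fun r => (Φ r₀ + (Real.log r₀ - Real.log (1 - r₀)) / C)
      - (Real.log r - Real.log (1 - r)) / C) (𝓝[>] 0) atTop :=
    tendsto_atTop_add_const_left _ _ (tendsto_neg_atBot_atTop.comp
      ((Real.tendsto_log_nhdsGT_zero.atBot_add hlog.neg).atBot_div_const hC))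
  refine tendsto_atTop_mono' _ ?_ hL
  filter_upwards [Ioo_mem_nhdsGT hr₀.1] with r hr
  linarith [hΦ ⟨hr.1, hr.2.trans hr₀.2⟩ hr₀ hr.2.le]

lemma tendsto_nhdsLT_one_of_antitoneOn_add_logit {Φ : ℝ → ℝ} (hC : 0 < C)
    (hr₀ : r₀ ∈ Ioo (0 : ℝ) 1)
    (hΦ : AntitoneOn (fun r => Φ r + (Real.log r - Real.log (1 - r)) / C) (Ioo 0 1)) :
    Tendsto Φ (𝓝[<] 1) atBot := by
  have hlog : Tendsto Real.log (𝓝[<] 1) (𝓝 0) := by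
    simpa using (Real.continuousAt_log one_ne_zero).tendsto.mono_left nhdsWithin_le_nhds
  have hsub : Tendsto (fun r : ℝ => 1 - r) (𝓝[<] 1) (𝓝[>] 0) := by
    have : ContinuousAt (fun r : ℝ => 1 - r) 1 := by fun_prop
    exact tendsto_nhdsWithin_iff.2 ⟨by simpa using this.tendsto.mono_left nhdsWithin_le_nhds,
      eventually_nhdsWithin_of_forall fun r (hr : r < 1) => sub_pos.2 hr⟩
  have hL : Tendsto (fun r => (Φ r₀ + (Real.log r₀ - Real.log (1 - r₀)) / C)
      - (Real.log r - Real.log (1 - r)) / C) (𝓝[<] 1) atBot :=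
    tendsto_atBot_add_const_left _ _ (tendsto_neg_atTop_atBot.comp
      ((hlog.add_atTop (tendsto_neg_atBot_atTop.comp
        (Real.tendsto_log_nhdsGT_zero.comp hsub))).atTop_div_const hC))
  refine tendsto_atBot_mono' _ ?_ hL
  filter_upwards [Ioo_mem_nhdsLT hr₀.2] with r hr
  linarith [hΦ hr₀ ⟨hr₀.1.trans hr.1, hr.2⟩ hr.1.le]

lemma isDecreasingPotential_integral_inv (hw : ContinuousOn w (Ioo 0 1))
    (hw_neg : ∀ r ∈ Ioo (0 : ℝ) 1, w r < 0) (hC : 0 < C)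
    (hw_lb : ∀ r ∈ Ioo (0 : ℝ) 1, -C * (r * (1 - r)) ≤ w r) (hr₀ : r₀ ∈ Ioo (0 : ℝ) 1) :
    IsDecreasingPotential (fun r => ∫ ρ in r₀..r, 1 / w ρ) (fun r => 1 / w r) 0 1 where
  hasDerivAt _ hx := hasDerivAt_integral_of_continuousOn (g := fun ρ => 1 / w ρ)
    (continuousOn_const.div hw fun r hr => (hw_neg r hr).ne) hr₀ hx
  continuousOn := continuousOn_const.div hw fun r hr => (hw_neg r hr).ne
  deriv_neg x hx := one_div_neg.2 (hw_neg x hx)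
  tendsto_atBot := tendsto_nhdsLT_one_of_antitoneOn_add_logit hC hr₀
    (antitoneOn_integral_inv_add_logit hw hw_neg hC hw_lb hr₀)

end InverseIntegral

theorem stmt_12
    (w : ℝ → ℝ) (C₁ C₂ : ℝ) (hC₁ : 0 < C₁) (hC₂ : 0 < C₂)
    (hw : ContDiffOn ℝ 1 w (Set.Icc 0 1))
    (hw_lb : ∀ r ∈ Set.Icc (0:ℝ) 1, -C₁ * (r * (1 - r)) ≤ w r)
    (hw_ub : ∀ r ∈ Set.Icc (0:ℝ) 1, w r ≤ -C₂ * (r * (1 - r)))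
    (lam : ℂ) (hlam : 0 < lam.re)
    (f : ℝ → ℂ) (hf : ContinuousOn f (Set.Icc 0 1))
    (r₀ : ℝ) (hr₀ : r₀ ∈ Set.Ioo (0:ℝ) 1)
    (q : ℝ → ℂ)
    (hq : ∀ r ∈ Set.Ioo (0:ℝ) 1,
      q r = Complex.exp (-lam * ((∫ ρ in r₀..r, 1 / w ρ : ℝ) : ℂ)) *
        ∫ η in r..(1:ℝ),
          (f η / (w η : ℂ)) * Complex.exp (lam * ((∫ ρ in r₀..η, 1 / w ρ : ℝ) : ℂ))) :
    ∃ Q Q' : ℝ → ℂ,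
      ContinuousOn Q (Set.Icc 0 1) ∧
      Set.EqOn Q q (Set.Ioo 0 1) ∧
      (∀ r ∈ Set.Ioo (0:ℝ) 1, HasDerivAt Q (Q' r) r) ∧
      ContinuousOn Q' (Set.Ioo 0 1) ∧
      (∀ r ∈ Set.Ioo (0:ℝ) 1, -(w r : ℂ) * Q' r - lam * Q r = f r) ∧
      ∀ Nf : ℝ, (∀ r ∈ Set.Icc (0:ℝ) 1, ‖f r‖ ≤ Nf) →
        ∀ r ∈ Set.Icc (0:ℝ) 1, ‖Q r‖ ≤ Nf / lam.re := by
  have hw_neg : ∀ r ∈ Ioo (0 : ℝ) 1, w r < 0 := fun r hr =>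
    (hw_ub r (Ioo_subset_Icc_self hr)).trans_lt (by nlinarith [mul_pos hr.1 (sub_pos.2 hr.2)])
  have hwc : ContinuousOn w (Ioo 0 1) := hw.continuousOn.mono Ioo_subset_Icc_self
  have hw_lb' := fun r (hr : r ∈ Ioo (0 : ℝ) 1) => hw_lb r (Ioo_subset_Icc_self hr)
  have hP := isDecreasingPotential_integral_inv hwc hw_neg hC₁ hw_lb' hr₀
  have hΦ := tendsto_nhdsGT_zero_of_antitoneOn_add_logit hC₁ hr₀
    (antitoneOn_integral_inv_add_logit hwc hw_neg hC₁ hw_lb' hr₀)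
  have hT := hP.continuousOn_tailSolution (lam := lam) hlam (hf.mono Ioc_subset_Icc_self)
  have hQ := hP.continuousOn_extendFrom_tailSolution hlam one_pos hΦ hf
  set T := tailSolution (fun r => ∫ ρ in r₀..r, 1 / w ρ) (fun r => 1 / w r) 1 lam f
  have hQT : EqOn (extendFrom (Ioo 0 1) T) T (Ioo 0 1) := extendFrom_extends hT
  refine ⟨extendFrom (Ioo 0 1) T,
    fun r => -((1 / w r : ℝ) : ℂ) * (lam * extendFrom (Ioo 0 1) T r + f r),
    hQ, fun r hr => ?_, fun r hr => ?_, ?_, fun r hr => ?_,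
    fun Nf hNf r hr => hP.norm_extendFrom_tailSolution_le hlam one_pos hΦ hf hNf hr⟩
  · rw [hQT hr, hq r hr]
    simp only [T, tailSolution]
    congr 1
    refine intervalIntegral.integral_congr fun η _ => ?_
    simp [div_eq_mul_inv]
  · beta_reduce
    rw [hQT hr]
    exact hasDerivAt_extendFrom_Ioo (fun x hx => hP.hasDerivAt_tailSolution hlam
      (hf.mono Ioc_subset_Icc_self) hx) hr
  · have := hP.continuousOn
    have := hQ.mono Ioo_subset_Icc_self
    have := hf.mono Ioo_subset_Icc_self
    fun_prop
  · have : (w r : ℂ) ≠ 0 := Complex.ofReal_ne_zero.2 (hw_neg r hr).ne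
    push_cast
    field_simp
    ring
end

section
/- Let λ ∈ ℂ with Re λ > 0 and let f : [0,1] → ℂ be continuous. If q₁ and q₂ are both continuous complex-valued functions on [0,1] that are continuously differentiable on (0,1) and satisfy −w(r)q'(r) − λ·q(r) = f(r) for all r ∈ (0,1), then q₁ = q₂. (Any two solutions differ by a multiple of e^{−λ∫_{r₀}^r dρ/w(ρ)}, which is unbounded as r → 1⁻ unless the multiple is zero.) -/
/-! The difference `g = q₁ - q₂` solves `w g' = -λ g`, so `φ = ‖g‖²` satisfies
`-w φ' = 2 Re λ φ`. Since `0 < -w r ≤ C₁ (1 - r)`, this gives `(1 - r) φ' ≥ K φ` with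
`K = 2 Re λ / C₁ > 0`, i.e. `φ (1 - r) ^ K` is nondecreasing on `(0, 1)`. As `φ` is bounded, this
nonnegative function is dominated near `1` by `M (1 - r) ^ K → 0`, so it vanishes. Hence
`q₁ = q₂` on `(0, 1)`, and on `[0, 1]` by continuity. -/

open Set Filter Topology

lemma monotoneOn_mul_sub_rpow_of_mul_le {φ φ' : ℝ → ℝ} {a b K : ℝ}
    (hφ : ∀ r ∈ Ioo a b, HasDerivAt φ (φ' r) r)
    (hgrowth : ∀ r ∈ Ioo a b, K * φ r ≤ (b - r) * φ' r) :
    MonotoneOn (fun r => φ r * (b - r) ^ K) (Ioo a b) := by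
  have hderiv : ∀ r ∈ Ioo a b, HasDerivAt (fun r => φ r * (b - r) ^ K)
      ((b - r) ^ (K - 1) * ((b - r) * φ' r - K * φ r)) r := by
    intro r hr
    have hbr : 0 < b - r := sub_pos.mpr hr.2
    have hpow : HasDerivAt (fun s => (b - s) ^ K) (K * (b - r) ^ (K - 1) * (-1)) r :=
      (Real.hasDerivAt_rpow_const (Or.inl hbr.ne')).comp r ((hasDerivAt_id r).const_sub b)
    refine ((hφ r hr).mul hpow).congr_deriv ?_
    rw [show (b - r) ^ K = (b - r) ^ (K - 1) * (b - r) by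
      rw [← Real.rpow_add_one hbr.ne']; ring_nf]
    ring
  refine monotoneOn_of_hasDerivWithinAt_nonneg (convex_Ioo a b)
    (fun r hr => (hderiv r hr).continuousAt.continuousWithinAt)
    (fun r hr => (hderiv r (interior_subset hr)).hasDerivWithinAt) fun r hr => ?_
  rw [interior_Ioo] at hr
  exact mul_nonneg (Real.rpow_nonneg (sub_pos.mpr hr.2).le _) (sub_nonneg.mpr (hgrowth r hr))

lemma nonpos_of_bddAbove_of_mul_le_sub_mul_deriv {φ φ' : ℝ → ℝ} {a b K M : ℝ} (hK : 0 < K)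
    (hφ : ∀ r ∈ Ioo a b, HasDerivAt φ (φ' r) r)
    (hgrowth : ∀ r ∈ Ioo a b, K * φ r ≤ (b - r) * φ' r)
    (hbdd : ∀ r ∈ Ioo a b, φ r ≤ M) :
    ∀ r ∈ Ioo a b, φ r ≤ 0 := by
  intro x hx
  have hweight : Tendsto (fun r => M * (b - r) ^ K) (𝓝[<] b) (𝓝 0) := by
    have : Tendsto (fun r => M * (b - r) ^ K) (𝓝 b) (𝓝 (M * (b - b) ^ K)) :=
      ((continuous_const.sub continuous_id).rpow_const fun _ => Or.inr hK.le).const_mul M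
        |>.tendsto b
    simpa [Real.zero_rpow hK.ne'] using this.mono_left nhdsWithin_le_nhds
  have hle : φ x * (b - x) ^ K ≤ 0 := by
    refine ge_of_tendsto hweight ?_
    filter_upwards [Ioo_mem_nhdsLT hx.2] with r hr
    have hr' : r ∈ Ioo a b := ⟨hx.1.trans hr.1, hr.2⟩
    calc φ x * (b - x) ^ K ≤ φ r * (b - r) ^ K :=
          monotoneOn_mul_sub_rpow_of_mul_le hφ hgrowth hx hr' hr.1.le
      _ ≤ M * (b - r) ^ K :=
          mul_le_mul_of_nonneg_right (hbdd r hr') (Real.rpow_nonneg (sub_pos.mpr hr.2).le _)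
  exact nonpos_of_mul_nonpos_left hle (Real.rpow_pos_of_pos (sub_pos.mpr hx.2) K)

lemma Complex.real_inner_mul_self_right (z c : ℂ) : inner ℝ z (c * z) = c.re * ‖z‖ ^ 2 := by
  rw [Complex.inner, mul_assoc, Complex.mul_conj, Complex.normSq_eq_norm_sq,
    Complex.re_mul_ofReal]

lemma mul_real_inner_eq_of_mul_eq_neg_mul {z z' c : ℂ} {w : ℝ} (h : (w : ℂ) * z' = -(c * z)) :
    w * inner ℝ z z' = -c.re * ‖z‖ ^ 2 := by
  rw [← real_inner_smul_right, Complex.real_smul, h, inner_neg_right,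
    Complex.real_inner_mul_self_right, neg_mul]

lemma eqOn_zero_of_hasDerivAt_of_mul_deriv_eq {g g' : ℝ → ℂ} {w : ℝ → ℝ} {c : ℂ} {a b C M : ℝ}
    (hC : 0 < C) (hc : 0 < c.re)
    (hg : ∀ r ∈ Ioo a b, HasDerivAt g (g' r) r)
    (hode : ∀ r ∈ Ioo a b, (w r : ℂ) * g' r = -(c * g r))
    (hw_neg : ∀ r ∈ Ioo a b, w r < 0) (hw_ge : ∀ r ∈ Ioo a b, -C * (b - r) ≤ w r)
    (hbdd : ∀ r ∈ Ioo a b, ‖g r‖ ≤ M) :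
    EqOn g 0 (Ioo a b) := by
  have hgrowth : ∀ r ∈ Ioo a b,
      2 * c.re / C * ‖g r‖ ^ 2 ≤ (b - r) * (2 * inner ℝ (g r) (g' r)) := by
    intro r hr
    have hw := hw_neg r hr
    have hwC := hw_ge r hr
    have hinner := mul_real_inner_eq_of_mul_eq_neg_mul (hode r hr)
    have hnonneg : 0 ≤ inner ℝ (g r) (g' r) := by
      nlinarith [mul_nonneg hc.le (sq_nonneg ‖g r‖)]
    rw [div_mul_eq_mul_div, div_le_iff₀ hC]
    nlinarith
  have hsq := nonpos_of_bddAbove_of_mul_le_sub_mul_deriv (div_pos (mul_pos two_pos hc) hC)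
    (fun r hr => (hg r hr).norm_sq) hgrowth
    (fun r hr => pow_le_pow_left₀ (norm_nonneg _) (hbdd r hr) 2)
  intro r hr
  simpa using hsq r hr

theorem stmt_13_general
    (w : ℝ → ℝ) (C₁ C₂ : ℝ) (hC₁ : 0 < C₁) (hC₂ : 0 < C₂)
    (hw_lb : ∀ r ∈ Set.Icc (0:ℝ) 1, -C₁ * (r * (1 - r)) ≤ w r)
    (hw_ub : ∀ r ∈ Set.Icc (0:ℝ) 1, w r ≤ -C₂ * (r * (1 - r)))
    (lam : ℂ) (hlam : 0 < lam.re)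
    (f : ℝ → ℂ)
    (q₁ q₂ q₁' q₂' : ℝ → ℂ)
    (hq₁_cont : ContinuousOn q₁ (Set.Icc 0 1))
    (hq₂_cont : ContinuousOn q₂ (Set.Icc 0 1))
    (hq₁_deriv : ∀ r ∈ Set.Ioo (0:ℝ) 1, HasDerivAt q₁ (q₁' r) r)
    (hq₂_deriv : ∀ r ∈ Set.Ioo (0:ℝ) 1, HasDerivAt q₂ (q₂' r) r)
    (hode₁ : ∀ r ∈ Set.Ioo (0:ℝ) 1, -(w r : ℂ) * q₁' r - lam * q₁ r = f r)
    (hode₂ : ∀ r ∈ Set.Ioo (0:ℝ) 1, -(w r : ℂ) * q₂' r - lam * q₂ r = f r) :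
    Set.EqOn q₁ q₂ (Set.Icc 0 1) := by
  obtain ⟨M, hM⟩ := isCompact_Icc.exists_bound_of_continuousOn (hq₁_cont.sub hq₂_cont)
  have hdiff : EqOn (q₁ - q₂) 0 (Ioo 0 1) := by
    refine eqOn_zero_of_hasDerivAt_of_mul_deriv_eq (w := w) hC₁ hlam
      (fun r hr => (hq₁_deriv r hr).sub (hq₂_deriv r hr)) (fun r hr => ?_) (fun r hr => ?_)
      (fun r hr => ?_) (fun r hr => hM r (Ioo_subset_Icc_self hr))
    · simp only [Pi.sub_apply]
      linear_combination hode₂ r hr - hode₁ r hr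
    · nlinarith [hw_ub r (Ioo_subset_Icc_self hr), mul_pos hr.1 (sub_pos.mpr hr.2)]
    · have h1r : 0 ≤ 1 - r := sub_nonneg.mpr hr.2.le
      nlinarith [hw_lb r (Ioo_subset_Icc_self hr), mul_nonneg (mul_nonneg hC₁.le h1r) h1r]
  refine EqOn.of_subset_closure (fun r hr => sub_eq_zero.mp (hdiff hr)) hq₁_cont hq₂_cont
    Ioo_subset_Icc_self ?_
  rw [closure_Ioo zero_ne_one]

theorem stmt_13
    (w : ℝ → ℝ) (C₁ C₂ : ℝ) (hC₁ : 0 < C₁) (hC₂ : 0 < C₂)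
    (hw : ContDiffOn ℝ 1 w (Set.Icc 0 1))
    (hw_lb : ∀ r ∈ Set.Icc (0:ℝ) 1, -C₁ * (r * (1 - r)) ≤ w r)
    (hw_ub : ∀ r ∈ Set.Icc (0:ℝ) 1, w r ≤ -C₂ * (r * (1 - r)))
    (lam : ℂ) (hlam : 0 < lam.re)
    (f : ℝ → ℂ) (hf : ContinuousOn f (Set.Icc 0 1))
    (q₁ q₂ q₁' q₂' : ℝ → ℂ)
    (hq₁_cont : ContinuousOn q₁ (Set.Icc 0 1))
    (hq₂_cont : ContinuousOn q₂ (Set.Icc 0 1))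
    (hq₁_deriv : ∀ r ∈ Set.Ioo (0:ℝ) 1, HasDerivAt q₁ (q₁' r) r)
    (hq₂_deriv : ∀ r ∈ Set.Ioo (0:ℝ) 1, HasDerivAt q₂ (q₂' r) r)
    (hq₁'_cont : ContinuousOn q₁' (Set.Ioo 0 1))
    (hq₂'_cont : ContinuousOn q₂' (Set.Ioo 0 1))
    (hode₁ : ∀ r ∈ Set.Ioo (0:ℝ) 1, -(w r : ℂ) * q₁' r - lam * q₁ r = f r)
    (hode₂ : ∀ r ∈ Set.Ioo (0:ℝ) 1, -(w r : ℂ) * q₂' r - lam * q₂ r = f r) :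
    Set.EqOn q₁ q₂ (Set.Icc 0 1) :=
  stmt_13_general w C₁ C₂ hC₁ hC₂ hw_lb hw_ub lam hlam f q₁ q₂ q₁' q₂' hq₁_cont hq₂_cont hq₁_deriv
    hq₂_deriv hode₁ hode₂
end

section
/- Let a : [0,1] → ℝ be continuous with ω₀ := max_{0≤r≤1} a(r), let λ ∈ ℂ with Re λ > ω₀, let f : [0,1] → ℂ be continuous, and fix r₀ ∈ (0,1). Define, for 0 < r < 1, q(r) = e^{∫_{r₀}^r (a(ρ)−λ)/w(ρ) dρ} · ∫_r^1 (f(η)/w(η)) · e^{−∫_{r₀}^η (a(ρ)−λ)/w(ρ) dρ} dη. Then q extends to a continuous function on [0,1], q is continuously differentiable on (0,1) and satisfies −w(r)q'(r) + a(r)q(r) − λ·q(r) = f(r) for all r ∈ (0,1), and max_{0≤r≤1}|q(r)| ≤ max_{0≤η≤1} |f(η)|/(Re λ − a(η)) ≤ ‖f‖_∞/(Re λ − ω₀). -/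
/-!
Write `g = (a - λ) / w` and `A` for its primitive from `r₀`, so that
`q r = e^{A r} ∫_r^1 (f / w) e^{-A}`. Since `0 < -w ≤ C₁ r (1 - r)` and `Re λ - a ≥ Re λ - ω₀ > 0`,
`Re g ≥ (Re λ - ω₀) / (C₁ r (1 - r))`, so `Re A` diverges logarithmically: to `+∞` at `1` and to
`-∞` at `0`.

The key estimate: if `‖k‖ ≤ N Re g` on `(r, 1)` then `‖e^{A r} ∫_r^1 k e^{-A}‖ ≤ N`, because
`Re g · e^{-Re A}` integrates to `e^{-Re A r}`. For `k = f / w` the hypothesis reads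
`‖f‖ ≤ N (Re λ - a)`, which gives the bound. Since `∫_r^1 g e^{-A} = e^{-A r}`, `q - c` is the same
transform applied to `(f - c (a - λ)) / w`; for `c = f x₀ / (a x₀ - λ)` at an endpoint `x₀` this
numerator is `o(Re λ - a)` near `x₀`, which yields the continuous extension (at `0` together with
`e^{Re A} → 0`).
-/

open Set Filter Topology MeasureTheory intervalIntegral Asymptotics Function

lemma tendsto_atTop_of_div_sub_le_deriv {F F' : ℝ → ℝ} {c r b : ℝ} (hc : 0 < c) (hrb : r < b)
    (hF : ∀ x ∈ Ico r b, HasDerivAt F (F' x) x) (hF' : ∀ x ∈ Ioo r b, c / (b - x) ≤ F' x) :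
    Tendsto F (𝓝[<] b) atTop := by
  set G := fun x => F x + c * Real.log (b - x)
  have hG : ∀ x ∈ Ico r b, HasDerivAt G (F' x - c / (b - x)) x := fun x hx => by
    have hlog := ((hasDerivAt_id x).const_sub b).log (sub_ne_zero.2 hx.2.ne')
    exact ((hF x hx).add (hlog.const_mul c)).congr_deriv (by simp only [id]; ring)
  have hmono : MonotoneOn G (Ico r b) := by
    refine monotoneOn_of_hasDerivWithinAt_nonneg (f' := fun x => F' x - c / (b - x))
      (convex_Ico r b) (fun x hx => (hG x hx).continuousAt.continuousWithinAt)
      (fun x hx => ?_) (fun x hx => ?_)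
    all_goals rw [interior_Ico] at hx
    · exact (hG x (Ioo_subset_Ico_self hx)).hasDerivWithinAt
    · exact sub_nonneg.2 (hF' x hx)
  have hsub : Tendsto (fun x => b - x) (𝓝[<] b) (𝓝[>] 0) := by
    refine tendsto_nhdsWithin_iff.2 ⟨?_, ?_⟩
    · exact tendsto_nhdsWithin_of_tendsto_nhds (by simpa using (continuous_sub_left b).tendsto b)
    · filter_upwards [self_mem_nhdsWithin] with x hx using sub_pos.2 (mem_Iio.1 hx)
  have hlog := (Real.tendsto_log_nhdsGT_zero.comp hsub).const_mul_atBot_of_neg (neg_neg_of_pos hc)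
  refine tendsto_atTop_mono' _ ?_ (tendsto_atTop_add_const_left _ (G r) hlog)
  filter_upwards [Ioo_mem_nhdsLT hrb] with x hx
  have := hmono ⟨le_rfl, hrb⟩ (Ioo_subset_Ico_self hx) hx.1.le
  simp only [G, comp_apply] at this ⊢
  linarith

lemma tendsto_atBot_of_div_sub_le_deriv {F F' : ℝ → ℝ} {c l r : ℝ} (hc : 0 < c) (hlr : l < r)
    (hF : ∀ x ∈ Ioc l r, HasDerivAt F (F' x) x) (hF' : ∀ x ∈ Ioo l r, c / (x - l) ≤ F' x) :
    Tendsto F (𝓝[>] l) atBot := by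
  set G := fun x => F x - c * Real.log (x - l)
  have hG : ∀ x ∈ Ioc l r, HasDerivAt G (F' x - c / (x - l)) x := fun x hx => by
    have hlog := ((hasDerivAt_id x).sub_const l).log (sub_ne_zero.2 hx.1.ne')
    exact ((hF x hx).sub (hlog.const_mul c)).congr_deriv (by simp only [id]; ring)
  have hmono : MonotoneOn G (Ioc l r) := by
    refine monotoneOn_of_hasDerivWithinAt_nonneg (f' := fun x => F' x - c / (x - l))
      (convex_Ioc l r) (fun x hx => (hG x hx).continuousAt.continuousWithinAt)
      (fun x hx => ?_) (fun x hx => ?_)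
    all_goals rw [interior_Ioc] at hx
    · exact (hG x (Ioo_subset_Ioc_self hx)).hasDerivWithinAt
    · exact sub_nonneg.2 (hF' x hx)
  have hsub : Tendsto (fun x => x - l) (𝓝[>] l) (𝓝[>] 0) := by
    refine tendsto_nhdsWithin_iff.2 ⟨?_, ?_⟩
    · exact tendsto_nhdsWithin_of_tendsto_nhds (by simpa using (continuous_sub_right l).tendsto l)
    · filter_upwards [self_mem_nhdsWithin] with x hx using sub_pos.2 (mem_Ioi.1 hx)
  have hlog := (Real.tendsto_log_nhdsGT_zero.comp hsub).const_mul_atBot hc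
  refine tendsto_atBot_mono' _ ?_ (tendsto_atBot_add_const_left _ (G r) hlog)
  filter_upwards [Ioo_mem_nhdsGT hlr] with x hx
  have := hmono (Ioo_subset_Ioc_self hx) ⟨hlr, le_rfl⟩ hx.2.le
  simp only [G, comp_apply] at this ⊢
  linarith

lemma continuousOn_update_update_Icc {E : Type*} [TopologicalSpace E] {f : ℝ → E} {l b : ℝ}
    {fl fb : E} (hlb : l < b) (hf : ContinuousOn f (Ioo l b))
    (hl : Tendsto f (𝓝[>] l) (𝓝 fl)) (hb : Tendsto f (𝓝[<] b) (𝓝 fb)) :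
    ContinuousOn (update (update f l fl) b fb) (Icc l b) := by
  rw [continuousOn_update_iff, continuousOn_update_iff, Icc_sdiff_right, Ico_sdiff_left]
  refine ⟨⟨hf, fun _ => hl.mono_left (nhdsWithin_mono _ Ioo_subset_Ioi_self)⟩, fun _ => ?_⟩
  refine (hb.congr' ?_).mono_left (nhdsWithin_mono _ Ico_subset_Iio_self)
  filter_upwards [Ioo_mem_nhdsLT hlb] with _ hx using (update_of_ne hx.1.ne' _ _).symm

lemma eqOn_update_update_Ioo {E : Type*} (f : ℝ → E) (l b : ℝ) (fl fb : E) :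
    EqOn (update (update f l fl) b fb) f (Ioo l b) := fun x hx => by
  rw [update_of_ne hx.2.ne, update_of_ne hx.1.ne']

lemma forall_mem_Icc_update_update {E : Type*} {f : ℝ → E} {l b : ℝ} {fl fb : E} {P : E → Prop}
    (hl : P fl) (hb : P fb) (hf : ∀ x ∈ Ioo l b, P (f x)) :
    ∀ x ∈ Icc l b, P (update (update f l fl) b fb x) := by
  intro x hx
  rcases hx.2.eq_or_lt with rfl | hxb
  · rwa [update_self]
  rcases hx.1.eq_or_lt with rfl | hlx
  · rwa [update_of_ne hxb.ne, update_self]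
  · rw [eqOn_update_update_Ioo f l b fl fb ⟨hlx, hxb⟩]
    exact hf x ⟨hlx, hxb⟩

lemma integrableOn_deriv_of_nonneg_of_tendsto {f f' : ℝ → ℝ} {a b fa fb : ℝ} (hab : a < b)
    (hderiv : ∀ x ∈ Ioo a b, HasDerivAt f (f' x) x) (hpos : ∀ x ∈ Ioo a b, 0 ≤ f' x)
    (ha : Tendsto f (𝓝[>] a) (𝓝 fa)) (hb : Tendsto f (𝓝[<] b) (𝓝 fb)) :
    IntegrableOn f' (Ioc a b) := by
  refine integrableOn_deriv_of_nonneg (continuousOn_update_update_Icc hab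
    (fun x hx => (hderiv x hx).continuousAt.continuousWithinAt) ha hb) (fun x hx => ?_) hpos
  exact (hderiv x hx).congr_of_eventuallyEq
    ((eqOn_update_update_Ioo f a b fa fb).eventuallyEq_of_mem (Ioo_mem_nhds hx.1 hx.2))

lemma HasDerivAt.re {A : ℝ → ℂ} {a : ℂ} {x : ℝ} (hA : HasDerivAt A a x) :
    HasDerivAt (fun y => (A y).re) a.re x :=
  Complex.reCLM.hasFDerivAt.comp_hasDerivAt x hA

noncomputable def weightedTail (A k : ℝ → ℂ) (b r : ℝ) : ℂ :=
  Complex.exp (A r) * ∫ η in r..b, k η * Complex.exp (-A η)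

section WeightedTail

variable {A g k : ℝ → ℂ} {l b r N : ℝ}

lemma hasDerivAt_neg_exp_neg_re {x : ℝ} (hA : HasDerivAt A (g x) x) :
    HasDerivAt (fun y => -Real.exp (-(A y).re)) ((g x).re * Real.exp (-(A x).re)) x :=
  hA.re.neg.exp.neg.congr_deriv (by simp only [Pi.neg_apply]; ring)

lemma hasDerivAt_neg_cexp_neg {x : ℝ} (hA : HasDerivAt A (g x) x) :
    HasDerivAt (fun y => -Complex.exp (-A y)) (g x * Complex.exp (-A x)) x :=
  hA.neg.cexp.neg.congr_deriv (by simp only [Pi.neg_apply]; ring)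

lemma norm_mul_cexp_neg (x : ℝ) :
    ‖k x * Complex.exp (-A x)‖ = ‖k x‖ * Real.exp (-(A x).re) := by
  rw [norm_mul, Complex.norm_exp, Complex.neg_re]

lemma tendsto_exp_neg_re_nhdsLT (hAb : Tendsto (fun x => (A x).re) (𝓝[<] b) atTop) :
    Tendsto (fun x => Real.exp (-(A x).re)) (𝓝[<] b) (𝓝 0) :=
  Real.tendsto_exp_atBot.comp (tendsto_neg_atTop_atBot.comp hAb)

lemma continuousOn_mul_cexp_neg (hA : ∀ x ∈ Ioo l b, HasDerivAt A (g x) x)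
    (hkc : ContinuousOn k (Ioo l b)) :
    ContinuousOn (fun x => k x * Complex.exp (-A x)) (Ioo l b) := fun x hx =>
  (hkc x hx).mul (hA x hx).continuousAt.continuousWithinAt.neg.cexp

variable (hA : ∀ x ∈ Ioo l b, HasDerivAt A (g x) x) (hg : ∀ x ∈ Ioo l b, 0 ≤ (g x).re)
  (hAb : Tendsto (fun x => (A x).re) (𝓝[<] b) atTop)

include hA hg hAb

lemma intervalIntegrable_mul_exp_neg_re (hr : r ∈ Ioo l b) :
    IntervalIntegrable (fun x => (g x).re * Real.exp (-(A x).re)) volume r b :=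
  (intervalIntegrable_iff_integrableOn_Ioc_of_le hr.2.le).2 <|
    integrableOn_deriv_of_nonneg_of_tendsto hr.2
      (fun x hx => hasDerivAt_neg_exp_neg_re (hA x ⟨hr.1.trans hx.1, hx.2⟩))
      (fun x hx => mul_nonneg (hg x ⟨hr.1.trans hx.1, hx.2⟩) (Real.exp_nonneg _))
      (hasDerivAt_neg_exp_neg_re (hA r hr)).continuousAt.continuousWithinAt
      (by simpa using (tendsto_exp_neg_re_nhdsLT hAb).neg)

lemma integral_mul_exp_neg_re (hr : r ∈ Ioo l b) :
    ∫ x in r..b, (g x).re * Real.exp (-(A x).re) = Real.exp (-(A r).re) := by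
  rw [integral_eq_sub_of_hasDerivAt_of_tendsto hr.2
    (fun x hx => hasDerivAt_neg_exp_neg_re (hA x ⟨hr.1.trans hx.1, hx.2⟩))
    (intervalIntegrable_mul_exp_neg_re hA hg hAb hr)
    (hasDerivAt_neg_exp_neg_re (hA r hr)).continuousAt.continuousWithinAt
    (by simpa using (tendsto_exp_neg_re_nhdsLT hAb).neg)]
  ring

lemma intervalIntegrable_mul_cexp_neg (hr : r ∈ Ioo l b) (hkc : ContinuousOn k (Ioo l b))
    (hk : ∀ x ∈ Ioo r b, ‖k x‖ ≤ N * (g x).re) :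
    IntervalIntegrable (fun x => k x * Complex.exp (-A x)) volume r b := by
  rw [intervalIntegrable_iff_integrableOn_Ioc_of_le hr.2.le, integrableOn_Ioc_iff_integrableOn_Ioo]
  refine (((intervalIntegrable_mul_exp_neg_re hA hg hAb hr).1.mono_set
    Ioo_subset_Ioc_self).const_mul N).mono' ?_ ?_
  · exact ((continuousOn_mul_cexp_neg hA hkc).mono
      (Ioo_subset_Ioo_left hr.1.le)).aestronglyMeasurable measurableSet_Ioo
  · refine (ae_restrict_iff' measurableSet_Ioo).2 (Eventually.of_forall fun x hx => ?_)
    rw [norm_mul_cexp_neg, ← mul_assoc]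
    exact mul_le_mul_of_nonneg_right (hk x hx) (Real.exp_nonneg _)

lemma norm_integral_mul_cexp_neg_le (hr : r ∈ Ioo l b)
    (hk : ∀ x ∈ Ioo r b, ‖k x‖ ≤ N * (g x).re) :
    ‖∫ x in r..b, k x * Complex.exp (-A x)‖ ≤ N * Real.exp (-(A r).re) := by
  calc ‖∫ x in r..b, k x * Complex.exp (-A x)‖
      ≤ ∫ x in r..b, N * ((g x).re * Real.exp (-(A x).re)) := by
        refine norm_integral_le_of_norm_le hr.2.le ?_
          ((intervalIntegrable_mul_exp_neg_re hA hg hAb hr).const_mul N)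
        filter_upwards [Measure.ae_ne volume b] with x hxb hx
        rw [norm_mul_cexp_neg, ← mul_assoc]
        exact mul_le_mul_of_nonneg_right (hk x ⟨hx.1, lt_of_le_of_ne hx.2 hxb⟩) (Real.exp_nonneg _)
    _ = N * Real.exp (-(A r).re) := by
        rw [intervalIntegral.integral_const_mul, integral_mul_exp_neg_re hA hg hAb hr]

lemma norm_weightedTail_le (hr : r ∈ Ioo l b)
    (hk : ∀ x ∈ Ioo r b, ‖k x‖ ≤ N * (g x).re) :
    ‖weightedTail A k b r‖ ≤ N := by
  rw [weightedTail, norm_mul, Complex.norm_exp]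
  calc Real.exp (A r).re * ‖∫ x in r..b, k x * Complex.exp (-A x)‖
      ≤ Real.exp (A r).re * (N * Real.exp (-(A r).re)) :=
        mul_le_mul_of_nonneg_left (norm_integral_mul_cexp_neg_le hA hg hAb hr hk)
          (Real.exp_nonneg _)
    _ = N := by rw [mul_left_comm, ← Real.exp_add, add_neg_cancel, Real.exp_zero, mul_one]

lemma intervalIntegrable_mul_cexp_neg_of_isBigO (hr : r ∈ Ioo l b)
    (hkc : ContinuousOn k (Ioo l b)) (hkO : k =O[𝓟 (Ioo l b)] fun x => (g x).re) :
    IntervalIntegrable (fun x => k x * Complex.exp (-A x)) volume r b := by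
  obtain ⟨N, hN⟩ := hkO.bound
  refine intervalIntegrable_mul_cexp_neg hA hg hAb hr hkc (N := N) fun x hx => ?_
  have hx' : x ∈ Ioo l b := ⟨hr.1.trans hx.1, hx.2⟩
  simpa [abs_of_nonneg (hg x hx')] using eventually_principal.1 hN x hx'

lemma integral_mul_cexp_neg_self (hr : r ∈ Ioo l b) (hgc : ContinuousOn g (Ioo l b))
    (hgO : g =O[𝓟 (Ioo l b)] fun x => (g x).re) :
    ∫ x in r..b, g x * Complex.exp (-A x) = Complex.exp (-A r) := by
  have hlim : Tendsto (fun x => -Complex.exp (-A x)) (𝓝[<] b) (𝓝 0) := by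
    refine tendsto_zero_iff_norm_tendsto_zero.2 ?_
    simpa [Complex.norm_exp] using tendsto_exp_neg_re_nhdsLT hAb
  rw [integral_eq_sub_of_hasDerivAt_of_tendsto hr.2
    (fun x hx => hasDerivAt_neg_cexp_neg (hA x ⟨hr.1.trans hx.1, hx.2⟩))
    (intervalIntegrable_mul_cexp_neg_of_isBigO hA hg hAb hr hgc hgO)
    (hasDerivAt_neg_cexp_neg (hA r hr)).continuousAt.continuousWithinAt hlim]
  ring

lemma hasDerivAt_weightedTail (hr : r ∈ Ioo l b) (hkc : ContinuousOn k (Ioo l b))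
    (hkO : k =O[𝓟 (Ioo l b)] fun x => (g x).re) :
    HasDerivAt (weightedTail A k b) (g r * weightedTail A k b r - k r) r := by
  have hc := continuousOn_mul_cexp_neg hA hkc
  have hint := integral_hasDerivAt_left
    (intervalIntegrable_mul_cexp_neg_of_isBigO hA hg hAb hr hkc hkO)
    (hc.stronglyMeasurableAtFilter isOpen_Ioo r hr) (hc.continuousAt (Ioo_mem_nhds hr.1 hr.2))
  refine ((hA r hr).cexp.mul hint).congr_deriv ?_
  rw [weightedTail, Complex.exp_neg]
  field_simp
  ring

lemma weightedTail_sub_const_mul (hr : r ∈ Ioo l b) (hkc : ContinuousOn k (Ioo l b))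
    (hkO : k =O[𝓟 (Ioo l b)] fun x => (g x).re) (hgc : ContinuousOn g (Ioo l b))
    (hgO : g =O[𝓟 (Ioo l b)] fun x => (g x).re) (c : ℂ) :
    weightedTail A (fun x => k x - c * g x) b r = weightedTail A k b r - c := by
  have hk := intervalIntegrable_mul_cexp_neg_of_isBigO hA hg hAb hr hkc hkO
  have hg' := intervalIntegrable_mul_cexp_neg_of_isBigO hA hg hAb hr hgc hgO
  simp only [weightedTail, sub_mul, mul_assoc]
  rw [integral_sub hk (hg'.const_mul c), intervalIntegral.integral_const_mul,
    integral_mul_cexp_neg_self hA hg hAb hr hgc hgO, mul_sub, mul_left_comm, ← Complex.exp_add,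
    add_neg_cancel, Complex.exp_zero, mul_one]

lemma norm_integral_mul_cexp_neg_le_sub {s : ℝ} (hr : r ∈ Ioo l b) (hs : s ∈ Ioo l b) (hrs : r ≤ s)
    (hk : ∀ x ∈ Ioo r s, ‖k x‖ ≤ N * (g x).re) :
    ‖∫ x in r..s, k x * Complex.exp (-A x)‖
      ≤ N * (Real.exp (-(A r).re) - Real.exp (-(A s).re)) := by
  have hsub : uIcc r s ⊆ Ioo l b := ordConnected_Ioo.uIcc_subset hr hs
  have hint : IntervalIntegrable (fun x => (g x).re * Real.exp (-(A x).re)) volume r s :=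
    (intervalIntegrable_mul_exp_neg_re hA hg hAb hr).mono_set
      (uIcc_subset_uIcc left_mem_uIcc (mem_uIcc_of_le hrs hs.2.le))
  calc ‖∫ x in r..s, k x * Complex.exp (-A x)‖
      ≤ ∫ x in r..s, N * ((g x).re * Real.exp (-(A x).re)) := by
        refine norm_integral_le_of_norm_le hrs ?_ (hint.const_mul N)
        filter_upwards [Measure.ae_ne volume s] with x hxs hx
        rw [norm_mul_cexp_neg, ← mul_assoc]
        exact mul_le_mul_of_nonneg_right (hk x ⟨hx.1, lt_of_le_of_ne hx.2 hxs⟩) (Real.exp_nonneg _)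
    _ = N * (Real.exp (-(A r).re) - Real.exp (-(A s).re)) := by
        rw [intervalIntegral.integral_const_mul, integral_eq_sub_of_hasDerivAt
          (fun x hx => hasDerivAt_neg_exp_neg_re (hA x (hsub hx))) hint]
        ring

lemma tendsto_weightedTail_nhdsLT (hlb : l < b) (hko : k =o[𝓝[<] b] fun x => (g x).re) :
    Tendsto (weightedTail A k b) (𝓝[<] b) (𝓝 0) := by
  refine Metric.tendsto_nhds.2 fun ε hε => ?_
  obtain ⟨s, hs, hsub⟩ := mem_nhdsLT_iff_exists_Ioo_subset.1 (hko.bound (half_pos hε))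
  filter_upwards [Ioo_mem_nhdsLT (max_lt hs hlb)] with y hy
  have hy' : y ∈ Ioo l b := ⟨(le_max_right _ _).trans_lt hy.1, hy.2⟩
  rw [dist_zero_right]
  refine (norm_weightedTail_le hA hg hAb hy' fun x hx => ?_).trans_lt (half_lt_self hε)
  have hx' : x ∈ Ioo l b := ⟨hy'.1.trans hx.1, hx.2⟩
  simpa [abs_of_nonneg (hg x hx')] using hsub ⟨(le_max_left _ _).trans_lt (hy.1.trans hx.1), hx.2⟩

lemma tendsto_weightedTail_nhdsGT (hlb : l < b)
    (hAl : Tendsto (fun x => (A x).re) (𝓝[>] l) atBot) (hkc : ContinuousOn k (Ioo l b))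
    (hkO : k =O[𝓟 (Ioo l b)] fun x => (g x).re) (hko : k =o[𝓝[>] l] fun x => (g x).re) :
    Tendsto (weightedTail A k b) (𝓝[>] l) (𝓝 0) := by
  refine Metric.tendsto_nhds.2 fun ε hε => ?_
  obtain ⟨u, hu, hsub⟩ := mem_nhdsGT_iff_exists_Ioo_subset.1 (hko.bound (half_pos hε))
  obtain ⟨s, hls, hsu⟩ := exists_between (lt_min hu hlb)
  have hs : s ∈ Ioo l b := ⟨hls, hsu.trans_le (min_le_right _ _)⟩
  set C := ‖∫ x in s..b, k x * Complex.exp (-A x)‖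
  have hsmall : Tendsto (fun y => Real.exp (A y).re * C) (𝓝[>] l) (𝓝 0) := by
    simpa using (Real.tendsto_exp_atBot.comp hAl).mul_const C
  filter_upwards [Ioo_mem_nhdsGT hs.1, hsmall.eventually (gt_mem_nhds (half_pos hε))]
    with y hy hyC
  have hy' : y ∈ Ioo l b := ⟨hy.1, hy.2.trans hs.2⟩
  have hnear : ‖∫ x in y..s, k x * Complex.exp (-A x)‖ ≤ ε / 2 * Real.exp (-(A y).re) := by
    refine (norm_integral_mul_cexp_neg_le_sub (N := ε / 2) hA hg hAb hy' hs hy.2.le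
      fun x hx => ?_).trans ?_
    · have hx' : x ∈ Ioo l b := ⟨hy.1.trans hx.1, hx.2.trans hs.2⟩
      simpa [abs_of_nonneg (hg x hx')] using
        hsub ⟨hx'.1, hx.2.trans (hsu.trans_le (min_le_left _ _))⟩
    · gcongr
      exact sub_le_self _ (Real.exp_nonneg _)
  have hint₁ : IntervalIntegrable (fun x => k x * Complex.exp (-A x)) volume y s :=
    ((continuousOn_mul_cexp_neg hA hkc).mono
      (ordConnected_Ioo.uIcc_subset hy' hs)).intervalIntegrable
  have hint₂ := intervalIntegrable_mul_cexp_neg_of_isBigO hA hg hAb hs hkc hkO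
  have hcancel : Real.exp (A y).re * Real.exp (-(A y).re) = 1 := by
    rw [← Real.exp_add, add_neg_cancel, Real.exp_zero]
  rw [dist_zero_right, weightedTail, ← integral_add_adjacent_intervals hint₁ hint₂, mul_add]
  calc _ ≤ Real.exp (A y).re * ‖∫ x in y..s, k x * Complex.exp (-A x)‖ + Real.exp (A y).re * C := by
        rw [← Complex.norm_exp, ← norm_mul, ← norm_mul]
        exact norm_add_le _ _
    _ ≤ Real.exp (A y).re * (ε / 2 * Real.exp (-(A y).re)) + Real.exp (A y).re * C := by
        gcongr
    _ < ε / 2 + ε / 2 := by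
        rw [mul_left_comm, hcancel, mul_one]
        exact add_lt_add_right hyC _
    _ = ε := add_halves ε

end WeightedTail

noncomputable def coeffRatio (w a : ℝ → ℝ) (lam : ℂ) (ρ : ℝ) : ℂ := ((a ρ : ℂ) - lam) / (w ρ : ℂ)

noncomputable def coeffPhase (w a : ℝ → ℝ) (lam : ℂ) (r₀ r : ℝ) : ℂ :=
  ∫ ρ in r₀..r, coeffRatio w a lam ρ

noncomputable def extendedSolution (w a : ℝ → ℝ) (lam : ℂ) (r₀ : ℝ) (f : ℝ → ℂ) : ℝ → ℂ :=
  update (update (weightedTail (coeffPhase w a lam r₀) (fun x => f x / (w x : ℂ)) 1)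
    0 (f 0 / ((a 0 : ℂ) - lam))) 1 (f 1 / ((a 1 : ℂ) - lam))

section Coefficients

variable {w a : ℝ → ℝ} {lam : ℂ} {C₁ ω₀ r₀ x N : ℝ} {f : ℝ → ℂ}

lemma re_coeffRatio : (coeffRatio w a lam x).re = (lam.re - a x) / -w x := by
  rw [coeffRatio, Complex.div_ofReal_re, Complex.sub_re, Complex.ofReal_re, div_neg, ← neg_div,
    neg_sub]

lemma sub_re_le_norm_ofReal_sub (α : ℝ) : lam.re - α ≤ ‖(α : ℂ) - lam‖ := by
  refine le_trans ?_ (Complex.abs_re_le_norm _)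
  rw [Complex.sub_re, Complex.ofReal_re, abs_sub_comm]
  exact le_abs_self _

lemma norm_div_ofReal_sub_le {α : ℝ} (z : ℂ) (hα : α < lam.re) :
    ‖z / ((α : ℂ) - lam)‖ ≤ ‖z‖ / (lam.re - α) := by
  rw [norm_div]
  exact div_le_div_of_nonneg_left (norm_nonneg z) (sub_pos.2 hα) (sub_re_le_norm_ofReal_sub α)

lemma norm_div_le_mul_re_coeffRatio {h : ℂ} (hwx : w x < 0) (hh : ‖h‖ ≤ N * (lam.re - a x)) :
    ‖h / (w x : ℂ)‖ ≤ N * (coeffRatio w a lam x).re := by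
  rw [norm_div, Complex.norm_real, Real.norm_of_nonpos hwx.le, re_coeffRatio, ← mul_div_assoc]
  exact div_le_div_of_nonneg_right hh (neg_nonneg.2 hwx.le)

variable (hwneg : ∀ x ∈ Ioo (0:ℝ) 1, w x < 0) (hw : ContinuousOn w (Icc 0 1))
  (ha : ContinuousOn a (Icc 0 1)) (hub : ∀ x ∈ Icc (0:ℝ) 1, a x ≤ ω₀) (hlam : ω₀ < lam.re)
  (hC₁ : 0 < C₁) (hw_lb : ∀ x ∈ Icc (0:ℝ) 1, -C₁ * (x * (1 - x)) ≤ w x) (hr₀ : r₀ ∈ Ioo 0 1)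
  (hf : ContinuousOn f (Icc 0 1))

include hwneg hub hlam in
lemma re_coeffRatio_nonneg (hx : x ∈ Ioo 0 1) : 0 ≤ (coeffRatio w a lam x).re := by
  rw [re_coeffRatio]
  exact div_nonneg (by linarith [hub x (Ioo_subset_Icc_self hx)]) (by linarith [hwneg x hx])

include hwneg hub hlam in
lemma norm_div_le_div_mul_re_coeffRatio {h : ℂ} {M : ℝ} (hx : x ∈ Ioo 0 1) (hM : ‖h‖ ≤ M) :
    ‖h / (w x : ℂ)‖ ≤ M / (lam.re - ω₀) * (coeffRatio w a lam x).re := by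
  refine norm_div_le_mul_re_coeffRatio (hwneg x hx) (hM.trans ?_)
  rw [div_mul_eq_mul_div, le_div_iff₀ (sub_pos.2 hlam)]
  exact mul_le_mul_of_nonneg_left (by linarith [hub x (Ioo_subset_Icc_self hx)])
    ((norm_nonneg h).trans hM)

include hwneg hub hlam in
lemma isBigO_div_re_coeffRatio {h : ℝ → ℂ} (hh : ContinuousOn h (Icc 0 1)) :
    (fun x => h x / (w x : ℂ)) =O[𝓟 (Ioo 0 1)] fun x => (coeffRatio w a lam x).re := by
  obtain ⟨M, hM⟩ := isCompact_Icc.exists_bound_of_continuousOn hh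
  refine IsBigO.of_bound (M / (lam.re - ω₀)) (eventually_principal.2 fun x hx => ?_)
  rw [Real.norm_of_nonneg (re_coeffRatio_nonneg hwneg hub hlam hx)]
  exact norm_div_le_div_mul_re_coeffRatio hwneg hub hlam hx (hM x (Ioo_subset_Icc_self hx))

include hwneg hub hlam in
lemma isLittleO_div_re_coeffRatio {h : ℝ → ℂ} {x₀ : ℝ} (hh : ContinuousWithinAt h (Icc 0 1) x₀)
    (hx₀ : h x₀ = 0) :
    (fun x => h x / (w x : ℂ)) =o[𝓝[Ioo 0 1] x₀] fun x => (coeffRatio w a lam x).re := by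
  refine isLittleO_iff.2 fun ε hε => ?_
  have hlim : Tendsto (fun x => ‖h x‖) (𝓝[Ioo 0 1] x₀) (𝓝 0) := by
    simpa [hx₀] using (hh.mono Ioo_subset_Icc_self).norm.tendsto
  filter_upwards [self_mem_nhdsWithin,
    hlim.eventually (ge_mem_nhds (mul_pos hε (sub_pos.2 hlam)))] with x hx hhx
  rw [Real.norm_of_nonneg (re_coeffRatio_nonneg hwneg hub hlam hx)]
  simpa [mul_div_cancel_right₀ _ (sub_pos.2 hlam).ne'] using
    norm_div_le_div_mul_re_coeffRatio hwneg hub hlam hx hhx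

include hwneg hw in
lemma continuousOn_div_ofReal {h : ℝ → ℂ} (hh : ContinuousOn h (Icc 0 1)) :
    ContinuousOn (fun x => h x / (w x : ℂ)) (Ioo 0 1) :=
  (hh.mono Ioo_subset_Icc_self).div
    (Complex.continuous_ofReal.comp_continuousOn (hw.mono Ioo_subset_Icc_self))
    fun x hx => Complex.ofReal_ne_zero.2 (hwneg x hx).ne

include hwneg hw ha in
lemma continuousOn_coeffRatio : ContinuousOn (coeffRatio w a lam) (Ioo 0 1) :=
  continuousOn_div_ofReal hwneg hw
    ((Complex.continuous_ofReal.comp_continuousOn ha).sub continuousOn_const)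

include hwneg hw ha hr₀ in
lemma hasDerivAt_coeffPhase (hx : x ∈ Ioo 0 1) :
    HasDerivAt (coeffPhase w a lam r₀) (coeffRatio w a lam x) x :=
  have hc := continuousOn_coeffRatio (lam := lam) hwneg hw ha
  integral_hasDerivAt_right (hc.mono (ordConnected_Ioo.uIcc_subset hr₀ hx)).intervalIntegrable
    (hc.stronglyMeasurableAtFilter isOpen_Ioo x hx) (hc.continuousAt (Ioo_mem_nhds hx.1 hx.2))

include hwneg hub hlam hw_lb in
lemma div_le_re_coeffRatio (hx : x ∈ Ioo 0 1) :
    (lam.re - ω₀) / (C₁ * (x * (1 - x))) ≤ (coeffRatio w a lam x).re := by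
  have hwx := hwneg x hx
  have hax := hub x (Ioo_subset_Icc_self hx)
  have hlb := hw_lb x (Ioo_subset_Icc_self hx)
  rw [re_coeffRatio]
  calc (lam.re - ω₀) / (C₁ * (x * (1 - x))) ≤ (lam.re - ω₀) / -w x :=
        div_le_div_of_nonneg_left (by linarith) (by linarith) (by linarith)
    _ ≤ (lam.re - a x) / -w x := div_le_div_of_nonneg_right (by linarith) (by linarith)

include hwneg hw ha hub hlam hC₁ hw_lb hr₀ in
lemma tendsto_re_coeffPhase_nhdsLT_one :
    Tendsto (fun x => (coeffPhase w a lam r₀ x).re) (𝓝[<] 1) atTop := by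
  refine tendsto_atTop_of_div_sub_le_deriv (div_pos (sub_pos.2 hlam) hC₁) hr₀.2
    (fun x hx => (hasDerivAt_coeffPhase hwneg hw ha hr₀ ⟨hr₀.1.trans_le hx.1, hx.2⟩).re)
    fun x hx => ?_
  have hx' : x ∈ Ioo (0:ℝ) 1 := ⟨hr₀.1.trans hx.1, hx.2⟩
  refine le_trans ?_ (div_le_re_coeffRatio hwneg hub hlam hw_lb hx')
  rw [div_div]
  have h1x : 0 < 1 - x := sub_pos.2 hx'.2
  gcongr
  · exact mul_pos hC₁ (mul_pos hx'.1 h1x)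
  · exact mul_le_of_le_one_left h1x.le hx'.2.le

include hwneg hw ha hub hlam hC₁ hw_lb hr₀ in
lemma tendsto_re_coeffPhase_nhdsGT_zero :
    Tendsto (fun x => (coeffPhase w a lam r₀ x).re) (𝓝[>] 0) atBot := by
  refine tendsto_atBot_of_div_sub_le_deriv (div_pos (sub_pos.2 hlam) hC₁) hr₀.1
    (fun x hx => (hasDerivAt_coeffPhase hwneg hw ha hr₀ ⟨hx.1, hx.2.trans_lt hr₀.2⟩).re)
    fun x hx => ?_
  have hx' : x ∈ Ioo (0:ℝ) 1 := ⟨hx.1, hx.2.trans hr₀.2⟩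
  refine le_trans ?_ (div_le_re_coeffRatio hwneg hub hlam hw_lb hx')
  have h1x : 0 < 1 - x := sub_pos.2 hx'.2
  rw [sub_zero, div_div, mul_comm x]
  gcongr
  · exact mul_pos hC₁ (mul_pos h1x hx'.1)
  · exact mul_le_of_le_one_left hx'.1.le (by linarith [hx'.1])

include hwneg hw ha hub hlam hC₁ hw_lb hr₀ in
lemma norm_weightedTail_coeffPhase_le (hN : ∀ x ∈ Ioo 0 1, ‖f x‖ ≤ N * (lam.re - a x))
    (hx : x ∈ Ioo 0 1) :
    ‖weightedTail (coeffPhase w a lam r₀) (fun x => f x / (w x : ℂ)) 1 x‖ ≤ N :=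
  norm_weightedTail_le (fun _ hy => hasDerivAt_coeffPhase hwneg hw ha hr₀ hy)
    (fun _ hy => re_coeffRatio_nonneg hwneg hub hlam hy)
    (tendsto_re_coeffPhase_nhdsLT_one hwneg hw ha hub hlam hC₁ hw_lb hr₀) hx
    fun y hy => norm_div_le_mul_re_coeffRatio (hwneg y ⟨hx.1.trans hy.1, hy.2⟩)
      (hN y ⟨hx.1.trans hy.1, hy.2⟩)

include hwneg hw ha hub hlam hC₁ hw_lb hr₀ hf in
lemma hasDerivAt_weightedTail_coeffPhase (hx : x ∈ Ioo 0 1) :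
    HasDerivAt (weightedTail (coeffPhase w a lam r₀) (fun x => f x / (w x : ℂ)) 1)
      (coeffRatio w a lam x * weightedTail (coeffPhase w a lam r₀) (fun x => f x / (w x : ℂ)) 1 x
        - f x / (w x : ℂ)) x :=
  hasDerivAt_weightedTail (fun _ hy => hasDerivAt_coeffPhase hwneg hw ha hr₀ hy)
    (fun _ hy => re_coeffRatio_nonneg hwneg hub hlam hy)
    (tendsto_re_coeffPhase_nhdsLT_one hwneg hw ha hub hlam hC₁ hw_lb hr₀) hx
    (continuousOn_div_ofReal hwneg hw hf) (isBigO_div_re_coeffRatio hwneg hub hlam hf)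

include hwneg hw ha hub hlam hC₁ hw_lb hr₀ hf in
lemma weightedTail_coeffPhase_eq_add (c : ℂ) (hx : x ∈ Ioo 0 1) :
    weightedTail (coeffPhase w a lam r₀) (fun x => f x / (w x : ℂ)) 1 x =
      weightedTail (coeffPhase w a lam r₀) (fun x => (f x - c * ((a x : ℂ) - lam)) / (w x : ℂ)) 1 x
        + c := by
  have hac : ContinuousOn (fun x => (a x : ℂ) - lam) (Icc 0 1) :=
    (Complex.continuous_ofReal.comp_continuousOn ha).sub continuousOn_const
  have hk : (fun x => (f x - c * ((a x : ℂ) - lam)) / (w x : ℂ)) =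
      fun x => f x / (w x : ℂ) - c * coeffRatio w a lam x := by
    funext x
    rw [coeffRatio, sub_div, mul_div_assoc]
  rw [hk, weightedTail_sub_const_mul (fun _ hy => hasDerivAt_coeffPhase hwneg hw ha hr₀ hy)
    (fun _ hy => re_coeffRatio_nonneg hwneg hub hlam hy)
    (tendsto_re_coeffPhase_nhdsLT_one hwneg hw ha hub hlam hC₁ hw_lb hr₀) hx
    (continuousOn_div_ofReal hwneg hw hf) (isBigO_div_re_coeffRatio hwneg hub hlam hf)
    (continuousOn_coeffRatio hwneg hw ha) (isBigO_div_re_coeffRatio hwneg hub hlam hac),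
    sub_add_cancel]

include hwneg ha hub hlam hf in
lemma isLittleO_sub_div_re_coeffRatio {x₀ : ℝ} (hx₀ : x₀ ∈ Icc 0 1) :
    (fun x => (f x - f x₀ / ((a x₀ : ℂ) - lam) * ((a x : ℂ) - lam)) / (w x : ℂ))
      =o[𝓝[Ioo 0 1] x₀] fun x => (coeffRatio w a lam x).re := by
  have hh : ContinuousOn (fun x => f x - f x₀ / ((a x₀ : ℂ) - lam) * ((a x : ℂ) - lam)) (Icc 0 1) :=
    hf.sub (continuousOn_const.mul
      ((Complex.continuous_ofReal.comp_continuousOn ha).sub continuousOn_const))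
  have hne : (a x₀ : ℂ) - lam ≠ 0 := norm_pos_iff.1 <|
    (sub_pos.2 <| (hub x₀ hx₀).trans_lt hlam).trans_le (sub_re_le_norm_ofReal_sub _)
  exact isLittleO_div_re_coeffRatio hwneg hub hlam (hh x₀ hx₀)
    (by rw [div_mul_cancel₀ _ hne, sub_self])

include hwneg hw ha hub hlam hC₁ hw_lb hr₀ hf in
lemma tendsto_weightedTail_coeffPhase_nhdsLT_one :
    Tendsto (weightedTail (coeffPhase w a lam r₀) (fun x => f x / (w x : ℂ)) 1) (𝓝[<] 1)
      (𝓝 (f 1 / ((a 1 : ℂ) - lam))) := by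
  have hko := isLittleO_sub_div_re_coeffRatio hwneg ha hub hlam hf (x₀ := 1) ⟨zero_le_one, le_rfl⟩
  rw [nhdsWithin_Ioo_eq_nhdsLT zero_lt_one] at hko
  have hzero := tendsto_weightedTail_nhdsLT (fun _ hy => hasDerivAt_coeffPhase hwneg hw ha hr₀ hy)
    (fun _ hy => re_coeffRatio_nonneg hwneg hub hlam hy)
    (tendsto_re_coeffPhase_nhdsLT_one hwneg hw ha hub hlam hC₁ hw_lb hr₀) zero_lt_one hko
  rw [← zero_add (f 1 / _)]
  refine (hzero.add_const _).congr' ?_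
  filter_upwards [Ioo_mem_nhdsLT zero_lt_one] with y hy
  exact (weightedTail_coeffPhase_eq_add hwneg hw ha hub hlam hC₁ hw_lb hr₀ hf _ hy).symm

include hwneg hw ha hub hlam hC₁ hw_lb hr₀ hf in
lemma tendsto_weightedTail_coeffPhase_nhdsGT_zero :
    Tendsto (weightedTail (coeffPhase w a lam r₀) (fun x => f x / (w x : ℂ)) 1) (𝓝[>] 0)
      (𝓝 (f 0 / ((a 0 : ℂ) - lam))) := by
  have hko := isLittleO_sub_div_re_coeffRatio hwneg ha hub hlam hf (x₀ := 0) ⟨le_rfl, zero_le_one⟩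
  rw [nhdsWithin_Ioo_eq_nhdsGT zero_lt_one] at hko
  have hh : ContinuousOn (fun x => f x - f 0 / ((a 0 : ℂ) - lam) * ((a x : ℂ) - lam)) (Icc 0 1) :=
    hf.sub (continuousOn_const.mul
      ((Complex.continuous_ofReal.comp_continuousOn ha).sub continuousOn_const))
  have hzero := tendsto_weightedTail_nhdsGT (fun _ hy => hasDerivAt_coeffPhase hwneg hw ha hr₀ hy)
    (fun _ hy => re_coeffRatio_nonneg hwneg hub hlam hy)
    (tendsto_re_coeffPhase_nhdsLT_one hwneg hw ha hub hlam hC₁ hw_lb hr₀) zero_lt_one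
    (tendsto_re_coeffPhase_nhdsGT_zero hwneg hw ha hub hlam hC₁ hw_lb hr₀)
    (continuousOn_div_ofReal hwneg hw hh) (isBigO_div_re_coeffRatio hwneg hub hlam hh) hko
  rw [← zero_add (f 0 / _)]
  refine (hzero.add_const _).congr' ?_
  filter_upwards [Ioo_mem_nhdsGT zero_lt_one] with y hy
  exact (weightedTail_coeffPhase_eq_add hwneg hw ha hub hlam hC₁ hw_lb hr₀ hf _ hy).symm

include hwneg hw ha hub hlam hC₁ hw_lb hr₀ hf in
lemma continuousOn_extendedSolution : ContinuousOn (extendedSolution w a lam r₀ f) (Icc 0 1) :=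
  continuousOn_update_update_Icc zero_lt_one
    (fun _ hx => (hasDerivAt_weightedTail_coeffPhase hwneg hw ha hub hlam hC₁ hw_lb hr₀ hf
      hx).continuousAt.continuousWithinAt)
    (tendsto_weightedTail_coeffPhase_nhdsGT_zero hwneg hw ha hub hlam hC₁ hw_lb hr₀ hf)
    (tendsto_weightedTail_coeffPhase_nhdsLT_one hwneg hw ha hub hlam hC₁ hw_lb hr₀ hf)

include hwneg hw ha hub hlam hC₁ hw_lb hr₀ in
lemma norm_extendedSolution_le (hN : ∀ x ∈ Icc (0:ℝ) 1, ‖f x‖ / (lam.re - a x) ≤ N) :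
    ∀ x ∈ Icc (0:ℝ) 1, ‖extendedSolution w a lam r₀ f x‖ ≤ N := by
  have hlt : ∀ x ∈ Icc (0:ℝ) 1, a x < lam.re := fun x hx => (hub x hx).trans_lt hlam
  refine forall_mem_Icc_update_update (P := fun z => ‖z‖ ≤ N)
    ((norm_div_ofReal_sub_le _ (hlt 0 ⟨le_rfl, zero_le_one⟩)).trans (hN 0 ⟨le_rfl, zero_le_one⟩))
    ((norm_div_ofReal_sub_le _ (hlt 1 ⟨zero_le_one, le_rfl⟩)).trans (hN 1 ⟨zero_le_one, le_rfl⟩))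
    fun x hx => norm_weightedTail_coeffPhase_le hwneg hw ha hub hlam hC₁ hw_lb hr₀
      (fun y hy => ?_) hx
  have hy' := Ioo_subset_Icc_self hy
  exact (div_le_iff₀ (sub_pos.2 (hlt y hy'))).1 (hN y hy')

end Coefficients

theorem stmt_14
    (w : ℝ → ℝ) (C₁ C₂ : ℝ) (hC₁ : 0 < C₁) (hC₂ : 0 < C₂)
    (hw : ContDiffOn ℝ 1 w (Set.Icc 0 1))
    (hw_lb : ∀ r ∈ Set.Icc (0:ℝ) 1, -C₁ * (r * (1 - r)) ≤ w r)
    (hw_ub : ∀ r ∈ Set.Icc (0:ℝ) 1, w r ≤ -C₂ * (r * (1 - r)))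
    (a : ℝ → ℝ) (ha : ContinuousOn a (Set.Icc 0 1))
    (ω₀ : ℝ) (hω₀ : IsGreatest (a '' Set.Icc (0:ℝ) 1) ω₀)
    (lam : ℂ) (hlam : ω₀ < lam.re)
    (f : ℝ → ℂ) (hf : ContinuousOn f (Set.Icc 0 1))
    (r₀ : ℝ) (hr₀ : r₀ ∈ Set.Ioo (0:ℝ) 1)
    (q : ℝ → ℂ)
    (hq : ∀ r ∈ Set.Ioo (0:ℝ) 1,
      q r = Complex.exp (∫ ρ in r₀..r, ((a ρ : ℂ) - lam) / (w ρ : ℂ)) *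
        ∫ η in r..(1:ℝ),
          (f η / (w η : ℂ)) *
            Complex.exp (-∫ ρ in r₀..η, ((a ρ : ℂ) - lam) / (w ρ : ℂ))) :
    ∃ Q Q' : ℝ → ℂ,
      ContinuousOn Q (Set.Icc 0 1) ∧
      Set.EqOn Q q (Set.Ioo 0 1) ∧
      (∀ r ∈ Set.Ioo (0:ℝ) 1, HasDerivAt Q (Q' r) r) ∧
      ContinuousOn Q' (Set.Ioo 0 1) ∧
      (∀ r ∈ Set.Ioo (0:ℝ) 1,
        -(w r : ℂ) * Q' r + (a r : ℂ) * Q r - lam * Q r = f r) ∧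
      (∀ N : ℝ, (∀ η ∈ Set.Icc (0:ℝ) 1, ‖f η‖ / (lam.re - a η) ≤ N) →
        ∀ r ∈ Set.Icc (0:ℝ) 1, ‖Q r‖ ≤ N) ∧
      (∀ Nf : ℝ, (∀ η ∈ Set.Icc (0:ℝ) 1, ‖f η‖ ≤ Nf) →
        ∀ r ∈ Set.Icc (0:ℝ) 1, ‖Q r‖ ≤ Nf / (lam.re - ω₀)) := by
  have hwC : ContinuousOn w (Icc 0 1) := hw.continuousOn
  have hub : ∀ r ∈ Icc (0:ℝ) 1, a r ≤ ω₀ := fun r hr => hω₀.2 ⟨r, hr, rfl⟩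
  have hwneg : ∀ r ∈ Ioo (0:ℝ) 1, w r < 0 := fun r hr => by
    nlinarith [hw_ub r (Ioo_subset_Icc_self hr), mul_pos hr.1 (sub_pos.2 hr.2)]
  set T := weightedTail (coeffPhase w a lam r₀) (fun x => f x / (w x : ℂ)) 1
  have hT := fun r (hr : r ∈ Ioo (0:ℝ) 1) =>
    hasDerivAt_weightedTail_coeffPhase hwneg hwC ha hub hlam hC₁ hw_lb hr₀ hf hr
  have hQ : EqOn (extendedSolution w a lam r₀ f) T (Ioo 0 1) := eqOn_update_update_Ioo _ _ _ _ _
  refine ⟨extendedSolution w a lam r₀ f, fun r => coeffRatio w a lam r * T r - f r / (w r : ℂ),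
    continuousOn_extendedSolution hwneg hwC ha hub hlam hC₁ hw_lb hr₀ hf,
    hQ.trans fun r hr => (hq r hr).symm,
    fun r hr => (hT r hr).congr_of_eventuallyEq (hQ.eventuallyEq_of_mem (Ioo_mem_nhds hr.1 hr.2)),
    ((continuousOn_coeffRatio hwneg hwC ha).mul
      fun r hr => (hT r hr).continuousAt.continuousWithinAt).sub
        (continuousOn_div_ofReal hwneg hwC hf),
    fun r hr => ?_, fun N => norm_extendedSolution_le hwneg hwC ha hub hlam hC₁ hw_lb hr₀,
    fun Nf hNf => norm_extendedSolution_le hwneg hwC ha hub hlam hC₁ hw_lb hr₀ fun η hη => ?_⟩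
  · have hwr : (w r : ℂ) ≠ 0 := Complex.ofReal_ne_zero.2 (hwneg r hr).ne
    rw [hQ hr]
    unfold coeffRatio
    field_simp
    ring
  · exact div_le_div₀ ((norm_nonneg _).trans (hNf 0 ⟨le_rfl, zero_le_one⟩)) (hNf η hη)
      (sub_pos.2 hlam) (by linarith [hub η hη])
end
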